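/- arXiv:2202.02836 — 4 statements merged into one kernel-verified Lean document; each statement's English description precedes it below -/
import Mathlib

section
/- Let X, Y be independent standard Gaussian random vectors in ℝⁿ and let U be a random variable uniformly distributed in [0,1], independent of X and Y. Let μ be the law of the random vector X + U·Y. Then there exist universal constants c, C > 0 such that c·√n ≤ L(μ, 1/2) ≤ C·√n. -/
open MeasureTheory ENNReal
open scoped Pointwise

noncomputable section

abbrev EucSp (n : ℕ) := EuclideanSpace ℝ (Fin n)

/-- One-dimensional Lebesgue measure of the intersection of `A` with the line
`{x + t • y : t ∈ ℝ}`. -/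
def lineMeas {n : ℕ} (A : Set (EucSp n)) (x y : EucSp n) : ℝ≥0∞ :=
  volume {t : ℝ | x + t • y ∈ A}

/-- Supremum over all lines (with unit direction) of the length of `ℓ ∩ A`. -/
def supLine {n : ℕ} (A : Set (EucSp n)) : ℝ≥0∞ :=
  ⨆ (x : EucSp n) (y : EucSp n) (_ : ‖y‖ = 1), lineMeas A x y

/-- `L(μ, a)`: infimum over Borel sets `A` with `μ A ≥ a` of the supremum over lines
of `|ℓ ∩ A|`. -/
def Lval {n : ℕ} (μ : Measure (EucSp n)) (a : ℝ) : ℝ≥0∞ :=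
  ⨅ (A : Set (EucSp n)) (_ : MeasurableSet A) (_ : ENNReal.ofReal a ≤ μ A), supLine A

/-- The uniform probability measure on a set `K`. -/
def unif {n : ℕ} (K : Set (EucSp n)) : Measure (EucSp n) :=
  (volume K)⁻¹ • volume.restrict K

/-- The normalizing constant `κ_{p,n}` making `B_p^n` of volume one. -/
def kpn (p : ℝ) (n : ℕ) : ℝ :=
  (Real.Gamma (1 + (n : ℝ) / p)) ^ ((1 : ℝ) / n) / (2 * Real.Gamma (1 + 1 / p))

/-- The `ℓ_p` ball `B_p^n` of volume one, for `1 ≤ p < ∞`. -/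
def BpFin (p : ℝ) (n : ℕ) : Set (EucSp n) :=
  {x | ∑ i, |x i| ^ p ≤ (kpn p n) ^ p}

/-- The unit cube `B_∞^n` of volume one. -/
def Cube (n : ℕ) : Set (EucSp n) := {x | ∀ i, |x i| ≤ 1 / 2}

/-- The joint law of `(X, Y, U)` where `X, Y` are independent standard Gaussian vectors in
`ℝⁿ` and `U` is an independent uniform random variable in `[0, 1]`: the measure on
`(ℝⁿ × ℝⁿ) × ℝ` with the product density with respect to Lebesgue measure. -/
def gaussGaussUnif (n : ℕ) : Measure ((EucSp n × EucSp n) × ℝ) :=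
  volume.withDensity fun q =>
    ENNReal.ofReal
      ((2 * Real.pi) ^ (-(n : ℝ) / 2) * Real.exp (-‖q.1.1‖ ^ 2 / 2) *
        ((2 * Real.pi) ^ (-(n : ℝ) / 2) * Real.exp (-‖q.1.2‖ ^ 2 / 2)) *
        Set.indicator (Set.Icc (0 : ℝ) 1) (fun _ => (1 : ℝ)) q.2)

/-- The law `μ` of the random vector `X + U • Y`. -/
def mixLaw (n : ℕ) : Measure (EucSp n) :=
  Measure.map (fun q : (EucSp n × EucSp n) × ℝ => q.1.1 + q.2 • q.1.2) (gaussGaussUnif n)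

def gdens (n : ℕ) (x : EucSp n) : ℝ≥0∞ :=
  ENNReal.ofReal ((2 * Real.pi) ^ (-(n : ℝ) / 2) * Real.exp (-‖x‖ ^ 2 / 2))

lemma gauss_integrable (n : ℕ) {b : ℝ} (hb : 0 < b) :
    Integrable (fun x : EucSp n => Real.exp (-b * ‖x‖^2)) := by
  have h := (GaussianFourier.integrable_cexp_neg_mul_sq_norm_add
    (b := (b:ℂ)) (by simpa using hb) 0 (0 : EucSp n)).norm
  convert h using 2 with x
  rw [Complex.norm_exp]
  congr 1
  simp [← Complex.ofReal_pow]

lemma gauss_lint (n : ℕ) {b : ℝ} (hb : 0 < b) :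
    ∫⁻ x : EucSp n, ENNReal.ofReal (Real.exp (-b * ‖x‖^2))
      = ENNReal.ofReal ((Real.pi / b) ^ ((n:ℝ)/2)) := by
  rw [← ofReal_integral_eq_lintegral_ofReal (gauss_integrable n hb)
      (Filter.Eventually.of_forall fun x => (Real.exp_pos _).le)]
  rw [GaussianFourier.integral_rexp_neg_mul_sq_norm hb]
  congr 2
  simp [finrank_euclideanSpace_fin]

lemma gdens_meas (n : ℕ) : Measurable (gdens n) := by
  unfold gdens; fun_prop

lemma gdens_lint (n : ℕ) : ∫⁻ x : EucSp n, gdens n x = 1 := by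
  have hc : (0:ℝ) ≤ (2*Real.pi)^(-(n:ℝ)/2) :=
    (Real.rpow_pos_of_pos (by positivity) _).le
  have he : ∀ x : EucSp n, Real.exp (-‖x‖^2/2) = Real.exp (-(1/2:ℝ)*‖x‖^2) := by
    intro x; ring_nf
  simp_rw [gdens, ENNReal.ofReal_mul hc, he]
  rw [lintegral_const_mul' _ _ ENNReal.ofReal_ne_top,
    gauss_lint n (by norm_num : (0:ℝ) < 1/2)]
  rw [← ENNReal.ofReal_mul hc]
  have h2 : Real.pi / (1/2) = 2 * Real.pi := by ring
  rw [h2, ← Real.rpow_add (by positivity),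
    show -(n:ℝ)/2 + (n:ℝ)/2 = 0 by ring, Real.rpow_zero, ENNReal.ofReal_one]

lemma rpow_half_eq_sqrt_pow (n : ℕ) {a : ℝ} (ha : 0 ≤ a) :
    a ^ ((n:ℝ)/2) = (Real.sqrt a) ^ n := by
  rw [Real.sqrt_eq_rpow, ← Real.rpow_natCast (a ^ ((1:ℝ)/2)) n, ← Real.rpow_mul ha]
  congr 1
  ring

lemma gauss_ind_bound (n : ℕ) (S : Set (EucSp n)) {b K : ℝ} (hb : 0 < b) (hK : 0 ≤ K)
    (h : ∀ x ∈ S, Real.exp (-‖x‖^2/2) ≤ K * Real.exp (-b*‖x‖^2)) :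
    ∫⁻ x : EucSp n, Set.indicator S (fun _ => (1:ℝ≥0∞)) x * gdens n x
      ≤ ENNReal.ofReal ((2*Real.pi)^(-(n:ℝ)/2) * K) * ENNReal.ofReal ((Real.pi/b)^((n:ℝ)/2)) := by
  have hc : (0:ℝ) ≤ (2*Real.pi)^(-(n:ℝ)/2) :=
    (Real.rpow_pos_of_pos (by positivity) _).le
  have hpt : ∀ x : EucSp n, Set.indicator S (fun _ => (1:ℝ≥0∞)) x * gdens n x
      ≤ ENNReal.ofReal ((2*Real.pi)^(-(n:ℝ)/2) * K) * ENNReal.ofReal (Real.exp (-b*‖x‖^2)) := by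
    intro x
    by_cases hx : x ∈ S
    · rw [Set.indicator_of_mem hx, one_mul, gdens, ← ENNReal.ofReal_mul (by positivity),
        mul_assoc]
      exact ENNReal.ofReal_le_ofReal
        (mul_le_mul_of_nonneg_left (h x hx) hc)
    · simp [Set.indicator_of_notMem hx]
  calc ∫⁻ x : EucSp n, Set.indicator S (fun _ => (1:ℝ≥0∞)) x * gdens n x
      ≤ ∫⁻ x : EucSp n, ENNReal.ofReal ((2*Real.pi)^(-(n:ℝ)/2) * K)
          * ENNReal.ofReal (Real.exp (-b*‖x‖^2)) := lintegral_mono hpt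
    _ = ENNReal.ofReal ((2*Real.pi)^(-(n:ℝ)/2) * K) * ENNReal.ofReal ((Real.pi/b)^((n:ℝ)/2)) := by
        rw [lintegral_const_mul' _ _ ENNReal.ofReal_ne_top, gauss_lint n hb]

lemma const_combine (n : ℕ) {b K : ℝ} (hb : 0 < b) (hK : 0 ≤ K) :
    ((2*Real.pi)^(-(n:ℝ)/2) * K) * ((Real.pi/b)^((n:ℝ)/2))
      = K * (Real.sqrt (1/(2*b))) ^ n := by
  have hpi := Real.pi_pos
  have h1 : (2*Real.pi)^(-(n:ℝ)/2) = ((2*Real.pi)^((n:ℝ)/2))⁻¹ := by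
    rw [← Real.rpow_neg (by positivity)]; ring_nf
  rw [h1]
  have h2 : ((2*Real.pi)^((n:ℝ)/2))⁻¹ * K * (Real.pi/b)^((n:ℝ)/2)
      = K * ((Real.pi/b)^((n:ℝ)/2) / (2*Real.pi)^((n:ℝ)/2)) := by ring
  rw [h2, ← Real.div_rpow (by positivity) (by positivity)]
  have h3 : Real.pi / b / (2*Real.pi) = 1/(2*b) := by
    field_simp
  rw [h3, rpow_half_eq_sqrt_pow n (by positivity)]

lemma exp_neg4_le : Real.exp (-4) ≤ 1/16 := by
  have h1 : (16:ℝ) ≤ Real.exp 4 := by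
    have h := Real.exp_one_gt_d9
    calc (16:ℝ) ≤ 2.7182818283 ^ (4:ℕ) := by norm_num
    _ ≤ (Real.exp 1)^(4:ℕ) := by apply pow_le_pow_left₀ (by norm_num) h.le
    _ = Real.exp 4 := by rw [← Real.exp_nat_mul]; norm_num
  rw [Real.exp_neg, inv_le_comm₀ (Real.exp_pos _) (by norm_num)]
  linarith

lemma exp_small_le : Real.exp (3/25) ≤ 25/22 := by
  have h : (22/25 : ℝ) ≤ Real.exp (-(3/25)) := by
    have := Real.add_one_le_exp (-(3/25) : ℝ); linarith
  have h2 : Real.exp (3/25) = (Real.exp (-(3/25)))⁻¹ := by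
    rw [← Real.exp_neg]; norm_num
  rw [h2, inv_le_comm₀ (Real.exp_pos _) (by norm_num)]
  linarith

lemma tail_bound (n : ℕ) (hn : 1 ≤ n) :
    ∫⁻ x : EucSp n, Set.indicator {x : EucSp n | 4*Real.sqrt n < ‖x‖}
      (fun _ => (1:ℝ≥0∞)) x * gdens n x ≤ ENNReal.ofReal (1/8) := by
  have hc : (0:ℝ) ≤ (2*Real.pi)^(-(n:ℝ)/2) :=
    (Real.rpow_pos_of_pos (by positivity) _).le
  have key := gauss_ind_bound n {x : EucSp n | 4*Real.sqrt n < ‖x‖}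
    (b := 1/4) (K := Real.exp (-(4*(n:ℝ)))) (by norm_num) (Real.exp_pos _).le ?_
  · refine key.trans ?_
    rw [← ENNReal.ofReal_mul (by positivity), const_combine n (by norm_num) (Real.exp_pos _).le]
    apply ENNReal.ofReal_le_ofReal
    have hs2 : Real.sqrt (1/(2*(1/4:ℝ))) = Real.sqrt 2 := by norm_num
    rw [hs2]
    have hK : Real.exp (-(4*(n:ℝ))) = (Real.exp (-4))^n := by
      rw [← Real.exp_nat_mul]; ring_nf
    rw [hK, ← mul_pow]
    have hsqrt2 : Real.sqrt 2 ≤ 2 := by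
      nlinarith [Real.sq_sqrt (show (0:ℝ) ≤ 2 by norm_num), Real.sqrt_nonneg 2]
    have ha : Real.exp (-4) * Real.sqrt 2 ≤ 1/8 := by
      calc Real.exp (-4) * Real.sqrt 2 ≤ (1/16) * 2 := by
            apply mul_le_mul exp_neg4_le hsqrt2 (Real.sqrt_nonneg 2) (by norm_num)
        _ = 1/8 := by norm_num
    have ha0 : (0:ℝ) ≤ Real.exp (-4) * Real.sqrt 2 := by positivity
    calc (Real.exp (-4) * Real.sqrt 2)^n ≤ (Real.exp (-4) * Real.sqrt 2)^1 :=
          pow_le_pow_of_le_one ha0 (ha.trans (by norm_num)) hn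
      _ = _ := pow_one _
      _ ≤ 1/8 := ha
  · intro x hx
    have hx' : 4*Real.sqrt n < ‖x‖ := hx
    have h1 : (4*Real.sqrt n)^2 ≤ ‖x‖^2 := by
      apply pow_le_pow_left₀ (by positivity) hx'.le
    have h2 : (4*Real.sqrt n)^2 = 16*n := by
      rw [mul_pow, Real.sq_sqrt (Nat.cast_nonneg n)]; norm_num
    have h3 : -‖x‖^2/2 = (-‖x‖^2/4) + (-(1/4)*‖x‖^2) := by ring
    rw [h3, Real.exp_add]
    apply mul_le_mul_of_nonneg_right _ (Real.exp_pos _).le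
    apply Real.exp_le_exp.mpr
    nlinarith

lemma small_bound (n : ℕ) (hn : 1 ≤ n) :
    ∫⁻ y : EucSp n, Set.indicator {y : EucSp n | ‖y‖ < Real.sqrt n / 10}
      (fun _ => (1:ℝ≥0∞)) y * gdens n y ≤ ENNReal.ofReal (1/4) := by
  have key := gauss_ind_bound n {y : EucSp n | ‖y‖ < Real.sqrt n / 10}
    (b := 25/2) (K := Real.exp (3*(n:ℝ)/25)) (by norm_num) (Real.exp_pos _).le ?_
  · refine key.trans ?_
    rw [← ENNReal.ofReal_mul (by positivity), const_combine n (by norm_num) (Real.exp_pos _).le]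
    apply ENNReal.ofReal_le_ofReal
    have hs2 : Real.sqrt (1/(2*(25/2:ℝ))) = 1/5 := by
      rw [show (1/(2*(25/2:ℝ))) = (1/5:ℝ)^2 by norm_num, Real.sqrt_sq (by norm_num)]
    rw [hs2]
    have hK : Real.exp (3*(n:ℝ)/25) = (Real.exp (3/25))^n := by
      rw [← Real.exp_nat_mul]; ring_nf
    rw [hK, ← mul_pow]
    have ha : Real.exp (3/25) * (1/5) ≤ 1/4 := by
      calc Real.exp (3/25) * (1/5) ≤ (25/22) * (1/5) := by
            apply mul_le_mul_of_nonneg_right exp_small_le (by norm_num)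
        _ ≤ 1/4 := by norm_num
    have ha0 : (0:ℝ) ≤ Real.exp (3/25) * (1/5) := by positivity
    calc (Real.exp (3/25) * (1/5))^n ≤ (Real.exp (3/25) * (1/5))^1 :=
          pow_le_pow_of_le_one ha0 (ha.trans (by norm_num)) hn
      _ = _ := pow_one _
      _ ≤ 1/4 := ha
  · intro y hy
    have hy' : ‖y‖ < Real.sqrt n / 10 := hy
    have h1 : ‖y‖^2 ≤ n/100 := by
      have := pow_le_pow_left₀ (norm_nonneg y) hy'.le 2
      have h2 : (Real.sqrt n / 10)^2 = n/100 := by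
        rw [div_pow, Real.sq_sqrt (Nat.cast_nonneg n)]; norm_num
      linarith
    have h3 : -‖y‖^2/2 = 12*‖y‖^2 + (-(25/2)*‖y‖^2) := by ring
    rw [h3, Real.exp_add]
    apply mul_le_mul_of_nonneg_right _ (Real.exp_pos _).le
    apply Real.exp_le_exp.mpr
    nlinarith


lemma hmap_meas (n : ℕ) :
    Measurable (fun q : (EucSp n × EucSp n) × ℝ => q.1.1 + q.2 • q.1.2) := by
  fun_prop

lemma segset_meas {n : ℕ} {A : Set (EucSp n)} (hA : MeasurableSet A) (p : EucSp n × EucSp n) :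
    MeasurableSet {u : ℝ | p.1 + u • p.2 ∈ A} := by
  have : Measurable (fun u : ℝ => p.1 + u • p.2) := by fun_prop
  exact this hA

lemma mixLaw_eq (n : ℕ) {A : Set (EucSp n)} (hA : MeasurableSet A) :
    mixLaw n A = ∫⁻ p : EucSp n × EucSp n,
      gdens n p.1 * gdens n p.2 *
        volume (Set.Icc (0:ℝ) 1 ∩ {u : ℝ | p.1 + u • p.2 ∈ A}) := by
  have hS : MeasurableSet ((fun q : (EucSp n × EucSp n) × ℝ => q.1.1 + q.2 • q.1.2) ⁻¹' A) :=
    hmap_meas n hA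
  set D : (EucSp n × EucSp n) × ℝ → ℝ≥0∞ := fun q =>
    ENNReal.ofReal
      ((2 * Real.pi) ^ (-(n : ℝ) / 2) * Real.exp (-‖q.1.1‖ ^ 2 / 2) *
        ((2 * Real.pi) ^ (-(n : ℝ) / 2) * Real.exp (-‖q.1.2‖ ^ 2 / 2)) *
        Set.indicator (Set.Icc (0 : ℝ) 1) (fun _ => (1 : ℝ)) q.2) with hD
  have hDmeas : Measurable D := by
    apply Measurable.ennreal_ofReal
    apply Measurable.mul
    · fun_prop
    · exact (measurable_const.indicator measurableSet_Icc).comp measurable_snd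
  rw [mixLaw, Measure.map_apply (hmap_meas n) hA, gaussGaussUnif,
    withDensity_apply _ hS, ← lintegral_indicator hS D]
  rw [Measure.volume_eq_prod, lintegral_prod _ ((hDmeas.indicator hS).aemeasurable)]
  congr 1
  ext p
  have hpt : ∀ u : ℝ,
      Set.indicator ((fun q : (EucSp n × EucSp n) × ℝ => q.1.1 + q.2 • q.1.2) ⁻¹' A) D (p, u)
      = (gdens n p.1 * gdens n p.2) *
        Set.indicator (Set.Icc (0:ℝ) 1 ∩ {u : ℝ | p.1 + u • p.2 ∈ A}) (1 : ℝ → ℝ≥0∞) u := by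
    intro u
    have e1 : (0:ℝ) ≤ (2 * Real.pi) ^ (-(n : ℝ) / 2) * Real.exp (-‖p.1‖ ^ 2 / 2) := by positivity
    by_cases hu1 : u ∈ Set.Icc (0:ℝ) 1 <;> by_cases hu2 : p.1 + u • p.2 ∈ A
    · simp [Set.indicator_apply, hu1, hu2, hD, gdens, ← ENNReal.ofReal_mul e1,
        Set.mem_Icc.mp hu1]
    · simp [Set.indicator_apply, hu1, hu2, hD, gdens]
    · have h3 : ¬(0 ≤ u ∧ u ≤ 1) := by simpa [Set.mem_Icc] using hu1
      simp [Set.indicator_apply, hu1, hu2, hD, gdens, h3]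
    · simp [Set.indicator_apply, hu1, hu2, hD]
  simp_rw [hpt]
  have hne : gdens n p.1 * gdens n p.2 ≠ ⊤ :=
    ENNReal.mul_ne_top ENNReal.ofReal_ne_top ENNReal.ofReal_ne_top
  rw [lintegral_const_mul' _ _ hne]
  congr 1
  exact lintegral_indicator_one (measurableSet_Icc.inter (segset_meas hA p))



lemma mixLaw_univ (n : ℕ) : mixLaw n Set.univ = 1 := by
  rw [mixLaw_eq n MeasurableSet.univ]
  have h : ∀ p : EucSp n × EucSp n,
      gdens n p.1 * gdens n p.2 *
        volume (Set.Icc (0:ℝ) 1 ∩ {u : ℝ | p.1 + u • p.2 ∈ Set.univ})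
        = gdens n p.1 * gdens n p.2 := by
    intro p
    simp [Real.volume_Icc]
  simp_rw [h]
  rw [Measure.volume_eq_prod,
    lintegral_prod_mul (gdens_meas n).aemeasurable (gdens_meas n).aemeasurable,
    gdens_lint, one_mul]

lemma lint_pair_one (n : ℕ) :
    ∫⁻ p : EucSp n × EucSp n, gdens n p.1 * gdens n p.2 = 1 := by
  rw [Measure.volume_eq_prod,
    lintegral_prod_mul (gdens_meas n).aemeasurable (gdens_meas n).aemeasurable,
    gdens_lint, one_mul]

lemma measure_ge_half (n : ℕ) (hn : 1 ≤ n) :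
    ENNReal.ofReal (1/2) ≤ mixLaw n (Metric.closedBall (0 : EucSp n) (8 * Real.sqrt n)) := by
  set r := Real.sqrt n with hr
  have hr0 : 0 ≤ r := Real.sqrt_nonneg _
  set A := Metric.closedBall (0 : EucSp n) (8*r) with hA
  have hAm : MeasurableSet A := measurableSet_closedBall
  have hSm : MeasurableSet {x : EucSp n | 4*r < ‖x‖} :=
    measurableSet_lt measurable_const measurable_norm
  have hindm : Measurable (Set.indicator {x : EucSp n | 4*r < ‖x‖} (fun _ => (1:ℝ≥0∞))) :=
    measurable_const.indicator hSm
  have hm1 : Measurable (fun p : EucSp n × EucSp n =>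
      (Set.indicator {x : EucSp n | 4*r < ‖x‖} (fun _ => (1:ℝ≥0∞)) p.1 * gdens n p.1)
        * gdens n p.2) :=
    ((hindm.comp measurable_fst).mul ((gdens_meas n).comp measurable_fst)).mul
      ((gdens_meas n).comp measurable_snd)
  have hcomp : mixLaw n Aᶜ ≤ ENNReal.ofReal (1/4) := by
    rw [mixLaw_eq n hAm.compl]
    have hpt : ∀ p : EucSp n × EucSp n,
        gdens n p.1 * gdens n p.2 * volume (Set.Icc (0:ℝ) 1 ∩ {u : ℝ | p.1 + u • p.2 ∈ Aᶜ})
        ≤ (Set.indicator {x : EucSp n | 4*r < ‖x‖} (fun _ => (1:ℝ≥0∞)) p.1 * gdens n p.1)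
            * gdens n p.2
          + gdens n p.1 *
            (Set.indicator {y : EucSp n | 4*r < ‖y‖} (fun _ => (1:ℝ≥0∞)) p.2 * gdens n p.2) := by
      intro p
      have hvol1 : volume (Set.Icc (0:ℝ) 1 ∩ {u : ℝ | p.1 + u • p.2 ∈ Aᶜ}) ≤ 1 := by
        refine (measure_mono Set.inter_subset_left).trans ?_
        rw [Real.volume_Icc]; simp
      by_cases h1 : 4*r < ‖p.1‖
      · refine le_trans ?_ le_self_add
        rw [Set.indicator_of_mem (show p.1 ∈ {x : EucSp n | 4*r < ‖x‖} from h1), one_mul]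
        calc gdens n p.1 * gdens n p.2 * volume _ ≤ gdens n p.1 * gdens n p.2 * 1 :=
              mul_le_mul_right hvol1 _
          _ = gdens n p.1 * gdens n p.2 := mul_one _
      · by_cases h2 : 4*r < ‖p.2‖
        · refine le_trans ?_ le_add_self
          rw [Set.indicator_of_mem (show p.2 ∈ {y : EucSp n | 4*r < ‖y‖} from h2), one_mul]
          calc gdens n p.1 * gdens n p.2 * volume _ ≤ gdens n p.1 * gdens n p.2 * 1 :=
                mul_le_mul_right hvol1 _
            _ = gdens n p.1 * gdens n p.2 := mul_one _
        · have hempty : Set.Icc (0:ℝ) 1 ∩ {u : ℝ | p.1 + u • p.2 ∈ Aᶜ} = ∅ := by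
            ext u
            simp only [Set.mem_inter_iff, Set.mem_setOf_eq, Set.mem_empty_iff_false,
              iff_false, not_and, Set.mem_Icc]
            intro hu hmem
            apply hmem
            rw [hA, Metric.mem_closedBall, dist_zero_right]
            push_neg at h1 h2
            calc ‖p.1 + u • p.2‖ ≤ ‖p.1‖ + ‖u • p.2‖ := norm_add_le _ _
              _ = ‖p.1‖ + |u| * ‖p.2‖ := by rw [norm_smul, Real.norm_eq_abs]
              _ ≤ 4*r + 1 * (4*r) := by
                  have hu1 : |u| ≤ 1 := abs_le.mpr ⟨by linarith [hu.1], hu.2⟩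
                  have := norm_nonneg p.2
                  apply add_le_add h1
                  apply mul_le_mul hu1 h2 (norm_nonneg _) (by norm_num)
              _ = 8*r := by ring
          rw [hempty]
          simp
    calc ∫⁻ p : EucSp n × EucSp n, gdens n p.1 * gdens n p.2 *
          volume (Set.Icc (0:ℝ) 1 ∩ {u : ℝ | p.1 + u • p.2 ∈ Aᶜ})
        ≤ ∫⁻ p : EucSp n × EucSp n,
            ((Set.indicator {x : EucSp n | 4*r < ‖x‖} (fun _ => (1:ℝ≥0∞)) p.1 * gdens n p.1)
              * gdens n p.2
            + gdens n p.1 *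
              (Set.indicator {y : EucSp n | 4*r < ‖y‖} (fun _ => (1:ℝ≥0∞)) p.2 * gdens n p.2)) :=
          lintegral_mono hpt
      _ = (∫⁻ p : EucSp n × EucSp n,
            (Set.indicator {x : EucSp n | 4*r < ‖x‖} (fun _ => (1:ℝ≥0∞)) p.1 * gdens n p.1)
              * gdens n p.2)
          + ∫⁻ p : EucSp n × EucSp n, gdens n p.1 *
              (Set.indicator {y : EucSp n | 4*r < ‖y‖} (fun _ => (1:ℝ≥0∞)) p.2 * gdens n p.2) :=
          lintegral_add_left hm1 _
      _ ≤ ENNReal.ofReal (1/8) + ENNReal.ofReal (1/8) := by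
          apply add_le_add
          · rw [Measure.volume_eq_prod,
              lintegral_prod_mul
                (f := fun x => Set.indicator {x : EucSp n | 4*r < ‖x‖} (fun _ => (1:ℝ≥0∞)) x * gdens n x)
                (hindm.mul (gdens_meas n)).aemeasurable
                (gdens_meas n).aemeasurable, gdens_lint, mul_one]
            exact tail_bound n hn
          · rw [Measure.volume_eq_prod,
              lintegral_prod_mul
                (g := fun x => Set.indicator {x : EucSp n | 4*r < ‖x‖} (fun _ => (1:ℝ≥0∞)) x * gdens n x)
                (gdens_meas n).aemeasurable
                (hindm.mul (gdens_meas n)).aemeasurable, gdens_lint, one_mul]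
            exact tail_bound n hn
      _ = ENNReal.ofReal (1/4) := by
          rw [← ENNReal.ofReal_add (by norm_num) (by norm_num)]; norm_num
  have hadd : mixLaw n A + mixLaw n Aᶜ = 1 := by
    rw [measure_add_measure_compl hAm, mixLaw_univ]
  have h1 : (1:ℝ≥0∞) ≤ mixLaw n A + ENNReal.ofReal (1/4) := by
    rw [← hadd]; exact add_le_add_right hcomp _
  have h2 : (1:ℝ≥0∞) - ENNReal.ofReal (1/4) ≤ mixLaw n A := tsub_le_iff_right.mpr h1
  refine le_trans ?_ h2
  rw [← ENNReal.ofReal_one, ← ENNReal.ofReal_sub _ (by norm_num)]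
  apply ENNReal.ofReal_le_ofReal
  norm_num

lemma supLine_ball (n : ℕ) (r : ℝ) (hr : 0 ≤ r) :
    supLine (Metric.closedBall (0 : EucSp n) r) ≤ ENNReal.ofReal (4*r) := by
  apply iSup_le; intro x; apply iSup_le; intro y; apply iSup_le; intro hy
  rw [lineMeas]
  rcases Set.eq_empty_or_nonempty
    {t : ℝ | x + t • y ∈ Metric.closedBall (0:EucSp n) r} with h | ⟨t₀, ht₀⟩
  · rw [h]; simp
  · have hsub : {t : ℝ | x + t • y ∈ Metric.closedBall (0:EucSp n) r}
        ⊆ Set.Icc (t₀ - 2*r) (t₀ + 2*r) := by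
      intro t ht
      have h1 : ‖x + t • y‖ ≤ r := mem_closedBall_zero_iff.mp ht
      have h2 : ‖x + t₀ • y‖ ≤ r := mem_closedBall_zero_iff.mp ht₀
      have h3 : |t - t₀| ≤ 2*r := by
        have he : (t - t₀) • y = (x + t • y) - (x + t₀ • y) := by
          rw [sub_smul]; abel
        calc |t - t₀| = |t - t₀| * ‖y‖ := by rw [hy, mul_one]
          _ = ‖(t - t₀) • y‖ := by rw [norm_smul, Real.norm_eq_abs]
          _ = ‖(x + t • y) - (x + t₀ • y)‖ := by rw [he]
          _ ≤ ‖x + t • y‖ + ‖x + t₀ • y‖ := norm_sub_le _ _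
          _ ≤ 2*r := by linarith
      have := abs_le.mp h3
      exact ⟨by linarith [this.2], by linarith [this.1]⟩
    calc volume {t : ℝ | x + t • y ∈ Metric.closedBall (0:EucSp n) r}
        ≤ volume (Set.Icc (t₀ - 2*r) (t₀ + 2*r)) := measure_mono hsub
      _ = ENNReal.ofReal (4*r) := by rw [Real.volume_Icc]; ring_nf

lemma upper_bound (n : ℕ) (hn : 1 ≤ n) :
    Lval (mixLaw n) (1/2) ≤ ENNReal.ofReal (32 * Real.sqrt n) := by
  calc Lval (mixLaw n) (1/2)
      ≤ supLine (Metric.closedBall (0:EucSp n) (8*Real.sqrt n)) := by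
        apply iInf_le_of_le (Metric.closedBall (0:EucSp n) (8*Real.sqrt n))
        apply iInf_le_of_le measurableSet_closedBall
        exact iInf_le_of_le (measure_ge_half n hn) le_rfl
    _ ≤ ENNReal.ofReal (4*(8*Real.sqrt n)) := supLine_ball n _ (by positivity)
    _ = ENNReal.ofReal (32*Real.sqrt n) := by ring_nf

lemma lower_bound (n : ℕ) (hn : 1 ≤ n) :
    ENNReal.ofReal (Real.sqrt n / 50) ≤ Lval (mixLaw n) (1/2) := by
  rw [Lval]
  apply le_iInf; intro A; apply le_iInf; intro hA; apply le_iInf; intro hmu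
  set r := Real.sqrt n with hr
  have hrpos : 0 < r := Real.sqrt_pos.mpr (by exact_mod_cast Nat.pos_of_ne_zero (by omega))
  have hindm : Measurable (Set.indicator {y : EucSp n | ‖y‖ < r/10} (fun _ => (1:ℝ≥0∞))) :=
    measurable_const.indicator (measurableSet_lt measurable_norm measurable_const)
  have hex : ∃ p : EucSp n × EucSp n, r/10 ≤ ‖p.2‖ ∧
      ENNReal.ofReal (1/5) ≤ volume (Set.Icc (0:ℝ) 1 ∩ {u : ℝ | p.1 + u • p.2 ∈ A}) := by
    by_contra hcon
    push_neg at hcon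
    have hpt : ∀ p : EucSp n × EucSp n,
        gdens n p.1 * gdens n p.2 * volume (Set.Icc (0:ℝ) 1 ∩ {u : ℝ | p.1 + u • p.2 ∈ A})
        ≤ gdens n p.1 *
            (Set.indicator {y : EucSp n | ‖y‖ < r/10} (fun _ => (1:ℝ≥0∞)) p.2 * gdens n p.2)
          + (gdens n p.1 * gdens n p.2) * ENNReal.ofReal (1/5) := by
      intro p
      have hvol1 : volume (Set.Icc (0:ℝ) 1 ∩ {u : ℝ | p.1 + u • p.2 ∈ A}) ≤ 1 := by
        refine (measure_mono Set.inter_subset_left).trans ?_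
        rw [Real.volume_Icc]; simp
      by_cases h : ‖p.2‖ < r/10
      · refine le_trans ?_ le_self_add
        rw [Set.indicator_of_mem (show p.2 ∈ {y : EucSp n | ‖y‖ < r/10} from h), one_mul]
        calc gdens n p.1 * gdens n p.2 * volume _ ≤ gdens n p.1 * gdens n p.2 * 1 :=
              mul_le_mul_right hvol1 _
          _ = gdens n p.1 * gdens n p.2 := mul_one _
      · push_neg at h
        refine le_trans ?_ le_add_self
        exact mul_le_mul_right (hcon p h).le _
    have hm1 : Measurable (fun p : EucSp n × EucSp n =>
        gdens n p.1 *
          (Set.indicator {y : EucSp n | ‖y‖ < r/10} (fun _ => (1:ℝ≥0∞)) p.2 * gdens n p.2)) :=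
      ((gdens_meas n).comp measurable_fst).mul
        (((hindm.comp measurable_snd)).mul ((gdens_meas n).comp measurable_snd))
    have hle : ENNReal.ofReal (1/2) ≤ ENNReal.ofReal (9/20) := by
      calc ENNReal.ofReal (1/2) ≤ mixLaw n A := by simpa using hmu
        _ = ∫⁻ p : EucSp n × EucSp n, gdens n p.1 * gdens n p.2 *
              volume (Set.Icc (0:ℝ) 1 ∩ {u : ℝ | p.1 + u • p.2 ∈ A}) := mixLaw_eq n hA
        _ ≤ ∫⁻ p : EucSp n × EucSp n,
              (gdens n p.1 *
                (Set.indicator {y : EucSp n | ‖y‖ < r/10} (fun _ => (1:ℝ≥0∞)) p.2 * gdens n p.2)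
              + (gdens n p.1 * gdens n p.2) * ENNReal.ofReal (1/5)) := lintegral_mono hpt
        _ = (∫⁻ p : EucSp n × EucSp n, gdens n p.1 *
              (Set.indicator {y : EucSp n | ‖y‖ < r/10} (fun _ => (1:ℝ≥0∞)) p.2 * gdens n p.2))
            + ∫⁻ p : EucSp n × EucSp n, (gdens n p.1 * gdens n p.2) * ENNReal.ofReal (1/5) :=
            lintegral_add_left hm1 _
        _ ≤ ENNReal.ofReal (1/4) + ENNReal.ofReal (1/5) := by
            apply add_le_add
            · rw [Measure.volume_eq_prod,
                lintegral_prod_mul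
                  (g := fun y => Set.indicator {y : EucSp n | ‖y‖ < r/10} (fun _ => (1:ℝ≥0∞)) y * gdens n y)
                  (gdens_meas n).aemeasurable
                  (hindm.mul (gdens_meas n)).aemeasurable, gdens_lint, one_mul]
              exact small_bound n hn
            · rw [lintegral_mul_const' _ _ ENNReal.ofReal_ne_top, lint_pair_one, one_mul]
        _ = ENNReal.ofReal (9/20) := by
            rw [← ENNReal.ofReal_add (by norm_num) (by norm_num)]; norm_num
    have : ENNReal.ofReal (9/20) < ENNReal.ofReal (1/2) :=
      (ENNReal.ofReal_lt_ofReal_iff (by norm_num)).mpr (by norm_num)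
    exact absurd hle (not_le.mpr this)
  obtain ⟨p, hy, hvol⟩ := hex
  have hy0 : p.2 ≠ 0 := by
    intro h0; rw [h0, norm_zero] at hy; linarith
  set yhat := ‖p.2‖⁻¹ • p.2 with hyhat
  have hyn : ‖yhat‖ = 1 := norm_smul_inv_norm hy0
  have hsup : lineMeas A p.1 yhat ≤ supLine A := by
    refine le_trans (le_iSup (fun _ : ‖yhat‖ = 1 => lineMeas A p.1 yhat) hyn) ?_
    refine le_trans (le_iSup (fun y => ⨆ (_ : ‖y‖ = 1), lineMeas A p.1 y) yhat) ?_
    exact le_iSup (fun x => ⨆ y, ⨆ (_ : ‖y‖ = 1), lineMeas A x y) p.1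
  refine le_trans ?_ hsup
  have hsubset : (‖p.2‖ • (Set.Icc (0:ℝ) 1 ∩ {u : ℝ | p.1 + u • p.2 ∈ A}))
      ⊆ {t : ℝ | p.1 + t • yhat ∈ A} := by
    rintro t ⟨u, hu, rfl⟩
    have he : (‖p.2‖ • u) • yhat = u • p.2 := by
      rw [hyhat, smul_smul, smul_eq_mul]
      rw [show ‖p.2‖ * u * ‖p.2‖⁻¹ = u * (‖p.2‖ * ‖p.2‖⁻¹) by ring,
        mul_inv_cancel₀ (norm_ne_zero_iff.mpr hy0), mul_one]
    show p.1 + (‖p.2‖ • u) • yhat ∈ A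
    rw [he]
    exact hu.2
  have hsmul : volume (‖p.2‖ • (Set.Icc (0:ℝ) 1 ∩ {u : ℝ | p.1 + u • p.2 ∈ A}))
      = ENNReal.ofReal ‖p.2‖ *
        volume (Set.Icc (0:ℝ) 1 ∩ {u : ℝ | p.1 + u • p.2 ∈ A}) := by
    rw [Measure.addHaar_smul_of_nonneg volume (norm_nonneg p.2)]
    congr 2
    simp
  calc ENNReal.ofReal (r/50) = ENNReal.ofReal (r/10) * ENNReal.ofReal (1/5) := by
        rw [← ENNReal.ofReal_mul (by positivity), show r/10*(1/5:ℝ) = r/50 by ring]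
    _ ≤ ENNReal.ofReal ‖p.2‖ *
          volume (Set.Icc (0:ℝ) 1 ∩ {u : ℝ | p.1 + u • p.2 ∈ A}) :=
        mul_le_mul' (ENNReal.ofReal_le_ofReal hy) hvol
    _ = volume (‖p.2‖ • (Set.Icc (0:ℝ) 1 ∩ {u : ℝ | p.1 + u • p.2 ∈ A})) := hsmul.symm
    _ ≤ volume {t : ℝ | p.1 + t • yhat ∈ A} := measure_mono hsubset
    _ = lineMeas A p.1 yhat := rfl


/-- For `μ` the law of `X + U·Y`, with `X, Y` independent standard Gaussians and `U`
independent uniform on `[0,1]`, there exist universal `c, C > 0` with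
`c·√n ≤ L(μ, 1/2) ≤ C·√n`. -/
theorem statement7 :
    ∃ c C : ℝ, 0 < c ∧ 0 < C ∧ ∀ n : ℕ, 1 ≤ n →
      ENNReal.ofReal (c * Real.sqrt n) ≤ Lval (mixLaw n) (1 / 2) ∧
      Lval (mixLaw n) (1 / 2) ≤ ENNReal.ofReal (C * Real.sqrt n) := by
  refine ⟨1/50, 32, by norm_num, by norm_num, fun n hn => ⟨?_, ?_⟩⟩
  · rw [show (1/50 : ℝ) * Real.sqrt n = Real.sqrt n / 50 by ring]
    exact lower_bound n hn
  · exact upper_bound n hn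

end
end

section
/- Let c̃, C̃ > 0 and let W be a random variable satisfying P(|W| ≥ t) ≤ C̃·e^{−c̃ t²} for all t > 0. Let 𝒜 be an event with P(𝒜) = ε ≤ 1/2. Then there exist constants C₁, C₂ > 0, depending only on c̃ and C̃, such that for every 0 < s < √|log ε|, E[1_𝒜 · e^{sW}] ≤ C₁·ε·e^{C₂·s·√|log ε|}. -/
open MeasureTheory ENNReal

/-!
Split `A` along `{M ≤ |W|}` with `M ≍ √|log ε|`. Off this set `e^{sW} ≤ e^{sM}`, contributing
`ε e^{sM}`. The set itself is cut into the unit annuli `M + k ≤ |W| < M + k + 1`, where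
`e^{sW} ≤ e^{s(M+k+1)}` and the tail bound gives mass `≤ C̃ e^{-c̃(M+k)²}`; as `s ≤ c̃ M`, these
terms decay like `e^{-c̃ k}` and sum to `O(e^{s(M+1) - c̃M²})`, which is `O(ε e^{s(M+1)})` once
`c̃ M² ≥ |log ε|`.
-/

theorem subset_iUnion_annulus {Ω : Type*} (W : Ω → ℝ) (M : ℝ) :
    {ω | M ≤ |W ω|} ⊆ ⋃ k : ℕ, {ω | M + k ≤ |W ω| ∧ |W ω| < M + k + 1} := by
  intro ω (hω : M ≤ |W ω|)
  refine Set.mem_iUnion.2 ⟨⌊|W ω| - M⌋₊, ?_, ?_⟩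
  · linarith [Nat.floor_le (sub_nonneg.2 hω)]
  · linarith [Nat.lt_floor_add_one (|W ω| - M)]

theorem exp_mul_add_sub_sq_le {s c M : ℝ} (hs : 0 ≤ s) (hc : 0 ≤ c) (hsM : s ≤ c * M) (k : ℕ) :
    Real.exp (s * (M + k + 1)) * Real.exp (-c * (M + k) ^ 2) ≤
      Real.exp (s * (M + 1) - c * M ^ 2) * Real.exp (-c) ^ k := by
  rw [← Real.exp_add, ← Real.exp_nat_mul, ← Real.exp_add]
  refine Real.exp_le_exp.2 ?_
  have hk : (k : ℝ) ≤ (k : ℝ) ^ 2 := by exact_mod_cast Nat.le_self_pow two_ne_zero k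
  have hk0 : (0 : ℝ) ≤ k := k.cast_nonneg
  nlinarith [mul_le_mul_of_nonneg_right hsM hk0, mul_nonneg hs hk0, mul_le_mul_of_nonneg_left hk hc]

theorem tsum_ofReal_mul_geometric {a r : ℝ} (ha : 0 ≤ a) (hr0 : 0 ≤ r) (hr1 : r < 1) :
    ∑' k : ℕ, ENNReal.ofReal (a * r ^ k) = ENNReal.ofReal (a * (1 - r)⁻¹) := by
  rw [← ENNReal.ofReal_tsum_of_nonneg (fun k => by positivity)
    ((summable_geometric_of_lt_one hr0 hr1).mul_left a), tsum_mul_left,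
    tsum_geometric_of_lt_one hr0 hr1]

theorem exists_cutoff_of_lt_sqrt_abs_log {c ε s : ℝ} (hc : 0 < c) (hε : 0 < ε) (hε2 : ε ≤ 1 / 2)
    (hs : 0 < s) (hsL : s < Real.sqrt |Real.log ε|) :
    ∃ M : ℝ, 0 < M ∧ s ≤ c * M ∧ Real.exp (-c * M ^ 2) ≤ ε ∧
      s * (M + 1) ≤ (3 + 1 / c) * s * Real.sqrt |Real.log ε| := by
  set L := |Real.log ε|
  have hL : L = -Real.log ε := abs_of_neg (Real.log_neg hε (by linarith))
  have hlog2 : Real.log 2 ≤ L := by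
    have := Real.log_le_log hε hε2
    rw [one_div, Real.log_inv] at this
    linarith
  have hsqrtL : 1 / 2 ≤ Real.sqrt L :=
    Real.le_sqrt_of_sq_le (by linarith [Real.log_two_gt_d9])
  have hK1 : 1 ≤ 1 + 1 / c := by simp [hc.le]
  have hK : 1 ≤ c * (1 + 1 / c) := by field_simp; linarith
  refine ⟨(1 + 1 / c) * Real.sqrt L, by positivity, ?_, ?_, ?_⟩
  · calc s ≤ 1 * Real.sqrt L := by linarith
      _ ≤ _ := by rw [← mul_assoc]; gcongr
  · have hM2 : L ≤ c * ((1 + 1 / c) * Real.sqrt L) ^ 2 := by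
      rw [mul_pow, Real.sq_sqrt (abs_nonneg _), ← mul_assoc, sq, ← mul_assoc]
      nlinarith [mul_le_mul hK hK1 zero_le_one (by positivity), abs_nonneg (Real.log ε)]
    calc _ ≤ Real.exp (Real.log ε) := Real.exp_le_exp.2 (by linarith)
      _ = ε := Real.exp_log hε
  · nlinarith [mul_le_mul_of_nonneg_left hsqrtL hs.le]

section

variable {Ω : Type*} [MeasurableSpace Ω] {μ : Measure Ω}

theorem setLIntegral_le_mul_measure {s : Set Ω} {f : Ω → ℝ≥0∞} {c : ℝ≥0∞}
    (hf : ∀ ω ∈ s, f ω ≤ c) : ∫⁻ ω in s, f ω ∂μ ≤ c * μ s :=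
  (setLIntegral_mono measurable_const hf).trans_eq (setLIntegral_const s c)

theorem setLIntegral_exp_le_of_le {W : Ω → ℝ} {s a : ℝ} (hs : 0 ≤ s) {S : Set Ω}
    (hW : ∀ ω ∈ S, W ω ≤ a) :
    ∫⁻ ω in S, ENNReal.ofReal (Real.exp (s * W ω)) ∂μ ≤
      ENNReal.ofReal (Real.exp (s * a)) * μ S :=
  setLIntegral_le_mul_measure fun ω hω =>
    ENNReal.ofReal_le_ofReal (Real.exp_le_exp.2 (mul_le_mul_of_nonneg_left (hW ω hω) hs))

theorem setLIntegral_exp_abs_ge_le_tsum {W : Ω → ℝ} {s : ℝ} (hs : 0 ≤ s) (M : ℝ) :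
    ∫⁻ ω in {ω | M ≤ |W ω|}, ENNReal.ofReal (Real.exp (s * W ω)) ∂μ ≤
      ∑' k : ℕ, ENNReal.ofReal (Real.exp (s * (M + k + 1))) * μ {ω | M + k ≤ |W ω|} :=
  calc _ ≤ ∫⁻ ω in ⋃ k : ℕ, {ω | M + k ≤ |W ω| ∧ |W ω| < M + k + 1},
          ENNReal.ofReal (Real.exp (s * W ω)) ∂μ :=
        lintegral_mono_set (subset_iUnion_annulus W M)
    _ ≤ ∑' k : ℕ, ∫⁻ ω in {ω | M + k ≤ |W ω| ∧ |W ω| < M + k + 1},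
          ENNReal.ofReal (Real.exp (s * W ω)) ∂μ := lintegral_iUnion_le _ _
    _ ≤ _ := ENNReal.tsum_le_tsum fun _ =>
        (setLIntegral_exp_le_of_le hs fun _ hω => (le_abs_self _).trans hω.2.le).trans
          (mul_le_mul_right (measure_mono fun _ hω => hω.1) _)

theorem setLIntegral_exp_abs_ge_le_of_tail {W : Ω → ℝ} {c C s M : ℝ} (hc : 0 < c) (hC : 0 ≤ C)
    (htail : ∀ t : ℝ, 0 < t → μ {ω | t ≤ |W ω|} ≤ ENNReal.ofReal (C * Real.exp (-c * t ^ 2)))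
    (hs : 0 ≤ s) (hM : 0 < M) (hsM : s ≤ c * M) :
    ∫⁻ ω in {ω | M ≤ |W ω|}, ENNReal.ofReal (Real.exp (s * W ω)) ∂μ ≤
      ENNReal.ofReal (C * (1 - Real.exp (-c))⁻¹ * Real.exp (s * (M + 1) - c * M ^ 2)) := by
  have hr : Real.exp (-c) < 1 := Real.exp_lt_one_iff.2 (neg_lt_zero.2 hc)
  calc _ ≤ ∑' k : ℕ, ENNReal.ofReal (Real.exp (s * (M + k + 1))) * μ {ω | M + k ≤ |W ω|} :=
        setLIntegral_exp_abs_ge_le_tsum hs M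
    _ ≤ ∑' k : ℕ,
          ENNReal.ofReal (C * Real.exp (s * (M + 1) - c * M ^ 2) * Real.exp (-c) ^ k) := by
        refine ENNReal.tsum_le_tsum fun k => ?_
        grw [htail _ (by positivity), ← ENNReal.ofReal_mul (Real.exp_nonneg _)]
        refine ENNReal.ofReal_le_ofReal ?_
        calc _ = C * (Real.exp (s * (M + k + 1)) * Real.exp (-c * (M + k) ^ 2)) := by ring
          _ ≤ C * (Real.exp (s * (M + 1) - c * M ^ 2) * Real.exp (-c) ^ k) :=
            mul_le_mul_of_nonneg_left (exp_mul_add_sub_sq_le hs hc.le hsM k) hC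
          _ = _ := by ring
    _ = _ := by
        rw [tsum_ofReal_mul_geometric (by positivity) (Real.exp_nonneg _) hr]
        ring_nf

theorem setLIntegral_exp_le_of_tail {W : Ω → ℝ} (hW : Measurable W) {c C s M : ℝ}
    (hc : 0 < c) (hC : 0 ≤ C)
    (htail : ∀ t : ℝ, 0 < t → μ {ω | t ≤ |W ω|} ≤ ENNReal.ofReal (C * Real.exp (-c * t ^ 2)))
    (hs : 0 ≤ s) (hM : 0 < M) (hsM : s ≤ c * M) (A : Set Ω) :
    ∫⁻ ω in A, ENNReal.ofReal (Real.exp (s * W ω)) ∂μ ≤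
      ENNReal.ofReal (Real.exp (s * M)) * μ A +
        ENNReal.ofReal (C * (1 - Real.exp (-c))⁻¹ * Real.exp (s * (M + 1) - c * M ^ 2)) := by
  rw [← lintegral_inter_add_sdiff _ A (measurableSet_le measurable_const hW.abs), add_comm]
  gcongr
  · exact (setLIntegral_exp_le_of_le hs fun ω hω => (le_abs_self _).trans (not_le.1 hω.2).le).trans
      (mul_le_mul_right (measure_mono Set.sdiff_subset) _)
  · exact (lintegral_mono_set Set.inter_subset_right).trans
      (setLIntegral_exp_abs_ge_le_of_tail hc hC htail hs hM hsM)

end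

/-- Let `W` be a sub-Gaussian random variable (`P(|W| ≥ t) ≤ C̃·e^{−c̃t²}` for `t > 0`) and
let `𝒜` be an event with `P(𝒜) = ε ≤ 1/2`.  Then there are `C₁, C₂ > 0` depending only on
`c̃, C̃` such that for every `0 < s < √|log ε|`,
`E[1_𝒜 e^{sW}] ≤ C₁·ε·e^{C₂·s·√|log ε|}`. -/
theorem statement9 (ctil Ctil : ℝ) (hc : 0 < ctil) (hC : 0 < Ctil) :
    ∃ C₁ C₂ : ℝ, 0 < C₁ ∧ 0 < C₂ ∧
      ∀ (Ω : Type) (_ : MeasurableSpace Ω) (P : Measure Ω), IsProbabilityMeasure P →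
        ∀ W : Ω → ℝ, Measurable W →
          (∀ t : ℝ, 0 < t →
            P {ω | t ≤ |W ω|} ≤ ENNReal.ofReal (Ctil * Real.exp (-ctil * t ^ 2))) →
          ∀ A : Set Ω, MeasurableSet A → ∀ ε : ℝ, 0 < ε → ε ≤ 1 / 2 →
            P A = ENNReal.ofReal ε →
            ∀ s : ℝ, 0 < s → s < Real.sqrt |Real.log ε| →
              (∫⁻ ω in A, ENNReal.ofReal (Real.exp (s * W ω)) ∂P) ≤
                ENNReal.ofReal (C₁ * ε * Real.exp (C₂ * s * Real.sqrt |Real.log ε|)) := by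
  set D := Ctil * (1 - Real.exp (-ctil))⁻¹
  have hD : 0 ≤ D :=
    mul_nonneg hC.le (inv_nonneg.2 (sub_nonneg.2 (Real.exp_le_one_iff.2 (by linarith))))
  refine ⟨1 + D, 3 + 1 / ctil, by positivity, by positivity, ?_⟩
  intro Ω _ P _ W hW htail A _ ε hε hε2 hPA s hs hsL
  obtain ⟨M, hM, hsM, hexpM, hsM1⟩ := exists_cutoff_of_lt_sqrt_abs_log hc hε hε2 hs hsL
  refine (setLIntegral_exp_le_of_tail hW hc hC.le htail hs.le hM hsM A).trans ?_
  rw [hPA, ← ENNReal.ofReal_mul (Real.exp_nonneg _),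
    ← ENNReal.ofReal_add (by positivity) (by positivity)]
  refine ENNReal.ofReal_le_ofReal ?_
  have hexp : Real.exp (s * M) ≤ Real.exp ((3 + 1 / ctil) * s * Real.sqrt |Real.log ε|) :=
    Real.exp_le_exp.2 (by linarith)
  calc Real.exp (s * M) * ε + D * Real.exp (s * (M + 1) - ctil * M ^ 2)
      = Real.exp (s * M) * ε + D * (Real.exp (s * (M + 1)) * Real.exp (-ctil * M ^ 2)) := by
        rw [← Real.exp_add]; ring_nf
    _ ≤ Real.exp ((3 + 1 / ctil) * s * Real.sqrt |Real.log ε|) * ε +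
        D * (Real.exp ((3 + 1 / ctil) * s * Real.sqrt |Real.log ε|) * ε) := by
        gcongr
    _ = _ := by ring
end

section
/- Let μ be an absolutely continuous probability measure on ℝⁿ. Then the function a ↦ L(μ, a) is monotone non-decreasing and continuous on the interval (0, 1). -/
open MeasureTheory ENNReal

noncomputable section

lemma lineMeas_le_supLine {n : ℕ} (A : Set (EucSp n)) {x y : EucSp n} (hy : ‖y‖ = 1) :
    lineMeas A x y ≤ supLine A :=
  le_iSup_of_le x (le_iSup_of_le y (le_iSup_of_le hy le_rfl))

lemma supLine_union_le {n : ℕ} (A B : Set (EucSp n)) :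
    supLine (A ∪ B) ≤ supLine A + supLine B := by
  refine iSup_le fun x => iSup_le fun y => iSup_le fun hy => ?_
  have : lineMeas (A ∪ B) x y ≤ lineMeas A x y + lineMeas B x y := by
    have h : {t : ℝ | x + t • y ∈ A ∪ B} = {t : ℝ | x + t • y ∈ A} ∪ {t : ℝ | x + t • y ∈ B} := rfl
    unfold lineMeas; rw [h]; exact measure_union_le {t : ℝ | x + t • y ∈ A} {t : ℝ | x + t • y ∈ B}
  exact this.trans (add_le_add (lineMeas_le_supLine A hy) (lineMeas_le_supLine B hy))

lemma supLine_le_of_subset_closedBall {n : ℕ} {A : Set (EucSp n)} {c : EucSp n} {R : ℝ}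
    (h : A ⊆ Metric.closedBall c R) : supLine A ≤ ENNReal.ofReal (4 * R) := by
  refine iSup_le fun x => iSup_le fun y => iSup_le fun hy => ?_
  rcases Set.eq_empty_or_nonempty {t : ℝ | x + t • y ∈ A} with he | ⟨t₀, ht₀⟩
  · simp [lineMeas, he]
  · have hsub : {t : ℝ | x + t • y ∈ A} ⊆ Set.Icc (t₀ - 2 * R) (t₀ + 2 * R) := by
      intro t ht
      have h1 : dist (x + t • y) c ≤ R := h ht
      have h2 : dist (x + t₀ • y) c ≤ R := h ht₀
      have h3 : dist (x + t • y) (x + t₀ • y) = |t - t₀| := by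
        rw [dist_eq_norm]
        have : (x + t • y) - (x + t₀ • y) = (t - t₀) • y := by
          rw [sub_smul]; abel
        rw [this, norm_smul, hy, mul_one, Real.norm_eq_abs]
      have h4 : |t - t₀| ≤ 2 * R := by
        rw [← h3]
        calc dist (x + t • y) (x + t₀ • y) ≤ dist (x + t • y) c + dist c (x + t₀ • y) :=
              dist_triangle _ _ _
          _ ≤ R + R := add_le_add h1 (by rwa [dist_comm])
          _ = 2 * R := by ring
      constructor <;> [linarith [abs_le.mp h4]; linarith [abs_le.mp h4]]
    calc lineMeas A x y ≤ volume (Set.Icc (t₀ - 2 * R) (t₀ + 2 * R)) := measure_mono hsub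
      _ = ENNReal.ofReal (4 * R) := by rw [Real.volume_Icc]; ring_nf

lemma Lval_le {n : ℕ} {μ : Measure (EucSp n)} {a : ℝ} {A : Set (EucSp n)}
    (hA : MeasurableSet A) (h : ENNReal.ofReal a ≤ μ A) : Lval μ a ≤ supLine A :=
  iInf_le_of_le A (iInf_le_of_le hA (iInf_le_of_le h le_rfl))

lemma Lval_mono' {n : ℕ} {μ : Measure (EucSp n)} {a₁ a₂ : ℝ} (h : a₁ ≤ a₂) :
    Lval μ a₁ ≤ Lval μ a₂ := by
  refine le_iInf fun A => le_iInf fun hA => le_iInf fun hμ => ?_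
  exact Lval_le hA ((ENNReal.ofReal_le_ofReal h).trans hμ)

lemma Lval_lt_top {n : ℕ} (μ : Measure (EucSp n)) [IsProbabilityMeasure μ] {a : ℝ}
    (ha : a < 1) : Lval μ a < ⊤ := by
  have hmono : Monotone fun k : ℕ => Metric.closedBall (0 : EucSp n) k := fun i j hij =>
    Metric.closedBall_subset_closedBall (by exact_mod_cast hij)
  have hU : (⋃ k : ℕ, Metric.closedBall (0 : EucSp n) k) = Set.univ := by
    ext x; simp only [Set.mem_iUnion, Set.mem_univ, iff_true, Metric.mem_closedBall]
    obtain ⟨k, hk⟩ := exists_nat_ge (dist x 0)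
    exact ⟨k, hk⟩
  have htendsto := tendsto_measure_iUnion_atTop (μ := μ) hmono
  rw [hU, measure_univ] at htendsto
  have hlt : ENNReal.ofReal a < 1 := ENNReal.ofReal_lt_one.mpr ha
  have hev : ∀ᶠ k : ℕ in Filter.atTop, ENNReal.ofReal a < μ (Metric.closedBall 0 k) :=
    htendsto.eventually_const_lt hlt
  obtain ⟨k, hk⟩ := hev.exists
  have := Lval_le (μ := μ) (a := a) (Metric.isClosed_closedBall.measurableSet) hk.le
  calc Lval μ a ≤ supLine (Metric.closedBall (0 : EucSp n) k) := this
    _ ≤ ENNReal.ofReal (4 * k) := supLine_le_of_subset_closedBall subset_rfl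
    _ < ⊤ := ENNReal.ofReal_lt_top

lemma key_lemma {n : ℕ} (μ : Measure (EucSp n)) [IsProbabilityMeasure μ] {b η : ℝ}
    (hb0 : 0 ≤ b) (hb : b < 1) (hη : 0 < η) :
    ∃ δ : ℝ, 0 < δ ∧ ∀ A : Set (EucSp n), μ A ≤ ENNReal.ofReal b →
      ∃ Q : Set (EucSp n), MeasurableSet Q ∧ ENNReal.ofReal δ ≤ μ (Q \ A) ∧
        supLine Q ≤ ENNReal.ofReal η := by
  -- find a large closed ball of measure > (1+b)/2
  have hmono : Monotone fun k : ℕ => Metric.closedBall (0 : EucSp n) k := fun i j hij =>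
    Metric.closedBall_subset_closedBall (by exact_mod_cast hij)
  have hU : (⋃ k : ℕ, Metric.closedBall (0 : EucSp n) k) = Set.univ := by
    ext x; simp only [Set.mem_iUnion, Set.mem_univ, iff_true, Metric.mem_closedBall]
    obtain ⟨k, hk⟩ := exists_nat_ge (dist x 0)
    exact ⟨k, hk⟩
  have htendsto := tendsto_measure_iUnion_atTop (μ := μ) hmono
  rw [hU, measure_univ] at htendsto
  have hlt : ENNReal.ofReal ((1 + b) / 2) < 1 := by
    rw [← ENNReal.ofReal_one]
    exact ENNReal.ofReal_lt_ofReal_iff (by norm_num) |>.mpr (by linarith)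
  obtain ⟨k, hk⟩ := (htendsto.eventually_const_lt hlt).exists
  set K := Metric.closedBall (0 : EucSp n) k with hK
  -- cover K by finitely many balls of radius η/4
  have hcompact : IsCompact K := isCompact_closedBall _ _
  have hcover : K ⊆ ⋃ c : EucSp n, Metric.ball c (η / 4) := by
    intro x _; exact Set.mem_iUnion.mpr ⟨x, Metric.mem_ball_self (by linarith)⟩
  obtain ⟨t, ht⟩ := hcompact.elim_finite_subcover _ (fun c => Metric.isOpen_ball) hcover
  set c0 : ℝ := (1 - b) / 2 with hc0
  have hc0pos : 0 < c0 := by simp [hc0]; linarith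
  refine ⟨c0 / (t.card + 1), by positivity, fun A hA => ?_⟩
  -- μ (K \ A) ≥ ofReal c0
  have hKA : ENNReal.ofReal c0 ≤ μ (K \ A) := by
    have h1 : ENNReal.ofReal c0 ≤ μ K - μ A := by
      have : ENNReal.ofReal c0 = ENNReal.ofReal ((1 + b) / 2) - ENNReal.ofReal b := by
        rw [← ENNReal.ofReal_sub _ hb0]; congr 1; rw [hc0]; ring
      rw [this]
      exact tsub_le_tsub hk.le hA
    exact h1.trans (le_measure_diff)
  -- some small ball has measure of difference ≥ δ
  by_contra hcon
  push_neg at hcon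
  have hall : ∀ c ∈ t, μ (Metric.ball c (η / 4) \ A) < ENNReal.ofReal (c0 / (t.card + 1)) := by
    intro c _
    have := hcon (Metric.ball c (η / 4)) Metric.isOpen_ball.measurableSet
    by_contra hge
    push_neg at hge
    exact absurd (this hge) (by
      push_neg
      have : Metric.ball c (η / 4) ⊆ Metric.closedBall c (η / 4) := Metric.ball_subset_closedBall
      calc supLine (Metric.ball c (η / 4)) ≤ ENNReal.ofReal (4 * (η / 4)) :=
            supLine_le_of_subset_closedBall this
        _ = ENNReal.ofReal η := by ring_nf)
  have hsum : μ (K \ A) ≤ ∑ c ∈ t, μ (Metric.ball c (η / 4) \ A) := by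
    refine (measure_mono ?_).trans (measure_biUnion_finset_le t _)
    intro x hx
    obtain ⟨hxK, hxA⟩ := hx
    obtain ⟨c, hct, hxc⟩ := Set.mem_iUnion₂.mp (ht hxK)
    exact Set.mem_iUnion₂.mpr ⟨c, hct, hxc, hxA⟩
  have hsum2 : ∑ c ∈ t, μ (Metric.ball c (η / 4) \ A) ≤
      t.card • ENNReal.ofReal (c0 / (t.card + 1)) :=
    Finset.sum_le_card_nsmul _ _ _ (fun c hc => (hall c hc).le)
  have hfinal : ENNReal.ofReal c0 ≤ ENNReal.ofReal (t.card * (c0 / (t.card + 1))) := by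
    calc ENNReal.ofReal c0 ≤ μ (K \ A) := hKA
      _ ≤ t.card • ENNReal.ofReal (c0 / (t.card + 1)) := hsum.trans hsum2
      _ = ENNReal.ofReal (t.card * (c0 / (t.card + 1))) := by
          rw [nsmul_eq_mul, ← ENNReal.ofReal_natCast t.card,
            ← ENNReal.ofReal_mul (Nat.cast_nonneg _)]
  have hcontra : t.card * (c0 / (t.card + 1)) < c0 := by
    rw [mul_div_assoc']
    rw [div_lt_iff₀ (by positivity)]
    have : (0:ℝ) < c0 := hc0pos
    nlinarith [Nat.cast_nonneg (α := ℝ) t.card]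
  have := (ENNReal.ofReal_le_ofReal_iff (by positivity)).mp hfinal
  linarith

lemma step_lemma {n : ℕ} (μ : Measure (EucSp n)) [IsProbabilityMeasure μ]
    {a₁ a₂ b η δ : ℝ} (ha₁ : 0 ≤ a₁) (h12 : a₁ ≤ a₂) (h2b : a₂ ≤ b) (h2δ : a₂ ≤ a₁ + δ)
    (hfin : Lval μ a₁ ≠ ⊤)
    (hkey : ∀ A : Set (EucSp n), μ A ≤ ENNReal.ofReal b →
      ∃ Q : Set (EucSp n), MeasurableSet Q ∧ ENNReal.ofReal δ ≤ μ (Q \ A) ∧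
        supLine Q ≤ ENNReal.ofReal η) :
    Lval μ a₂ ≤ Lval μ a₁ + ENNReal.ofReal η := by
  refine ENNReal.le_of_forall_pos_le_add fun ε hε _ => ?_
  -- choose a near-optimal set for a₁
  have hlt : Lval μ a₁ < Lval μ a₁ + ε :=
    ENNReal.lt_add_right hfin (by exact_mod_cast hε.ne')
  conv_lhs at hlt => rw [Lval]
  rw [iInf_lt_iff] at hlt
  obtain ⟨A, hlt⟩ := hlt
  rw [iInf_lt_iff] at hlt
  obtain ⟨hA, hlt⟩ := hlt
  rw [iInf_lt_iff] at hlt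
  obtain ⟨hμA, hlt⟩ := hlt
  by_cases hcase : ENNReal.ofReal a₂ ≤ μ A
  · calc Lval μ a₂ ≤ supLine A := Lval_le hA hcase
      _ ≤ Lval μ a₁ + ε := hlt.le
      _ ≤ Lval μ a₁ + ENNReal.ofReal η + ε := by
          gcongr; exact le_self_add
  · push_neg at hcase
    have hAb : μ A ≤ ENNReal.ofReal b :=
      hcase.le.trans (ENNReal.ofReal_le_ofReal h2b)
    obtain ⟨Q, hQ, hQA, hQline⟩ := hkey A hAb
    have hmeas : ENNReal.ofReal a₂ ≤ μ (A ∪ Q) := by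
      have hdisj : Disjoint A (Q \ A) := disjoint_sdiff_self_right
      have : μ (A ∪ Q) = μ A + μ (Q \ A) := by
        rw [← Set.union_diff_self, measure_union hdisj (hQ.diff hA)]
      rw [this]
      calc ENNReal.ofReal a₂ ≤ ENNReal.ofReal (a₁ + δ) := ENNReal.ofReal_le_ofReal h2δ
        _ = ENNReal.ofReal a₁ + ENNReal.ofReal δ := ENNReal.ofReal_add ha₁
            (by linarith)
        _ ≤ μ A + μ (Q \ A) := add_le_add hμA hQA
    calc Lval μ a₂ ≤ supLine (A ∪ Q) := Lval_le (hA.union hQ) hmeas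
      _ ≤ supLine A + supLine Q := supLine_union_le A Q
      _ ≤ (Lval μ a₁ + ε) + ENNReal.ofReal η := add_le_add hlt.le hQline
      _ = Lval μ a₁ + ENNReal.ofReal η + ε := by ring

/-- For an absolutely continuous probability measure `μ` on `ℝⁿ`, the function
`a ↦ L(μ, a)` is monotone non-decreasing and continuous on `(0, 1)`. -/
theorem statement13 {n : ℕ} (μ : Measure (EucSp n)) (hprob : IsProbabilityMeasure μ)
    (hac : μ ≪ volume) :
    MonotoneOn (fun a : ℝ => Lval μ a) (Set.Ioo (0 : ℝ) 1) ∧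
    ContinuousOn (fun a : ℝ => Lval μ a) (Set.Ioo (0 : ℝ) 1) := by
  haveI := hprob
  constructor
  · intro a₁ _ a₂ _ h
    exact Lval_mono' h
  · intro a ha
    obtain ⟨ha0, ha1⟩ := ha
    have hfin : Lval μ a ≠ ⊤ := (Lval_lt_top μ ha1).ne
    rw [ContinuousWithinAt]
    rw [ENNReal.tendsto_nhds hfin]
    intro ε hε
    -- pick a real η with ofReal η ≤ ε
    obtain ⟨η, hη, hηε⟩ : ∃ η : ℝ, 0 < η ∧ ENNReal.ofReal η ≤ ε := by
      rcases eq_or_ne ε ⊤ with rfl | hne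
      · exact ⟨1, one_pos, le_top⟩
      · exact ⟨ε.toReal, ENNReal.toReal_pos hε.ne' hne,
          by rw [ENNReal.ofReal_toReal hne]⟩
    set b : ℝ := (1 + a) / 2 with hbdef
    have hab : a < b := by rw [hbdef]; linarith
    have hb1 : b < 1 := by rw [hbdef]; linarith
    have hb0 : 0 ≤ b := by rw [hbdef]; linarith
    obtain ⟨δ, hδ, hkey⟩ := key_lemma μ hb0 hb1 hη
    set δ' : ℝ := min δ (min (b - a) a) with hδ'def
    have hδ'pos : 0 < δ' := by
      apply lt_min hδ
      exact lt_min (by linarith) ha0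
    have hδ'δ : δ' ≤ δ := min_le_left _ _
    have hδ'b : δ' ≤ b - a := (min_le_right _ _).trans (min_le_left _ _)
    have hδ'a : δ' ≤ a := (min_le_right _ _).trans (min_le_right _ _)
    have hmem : Set.Ioo (a - δ') (a + δ') ∈ nhdsWithin a (Set.Ioo (0:ℝ) 1) :=
      nhdsWithin_le_nhds (Ioo_mem_nhds (by linarith) (by linarith))
    filter_upwards [hmem, self_mem_nhdsWithin] with x hx hx01
    obtain ⟨hx1, hx2⟩ := hx
    obtain ⟨hx0, hxlt1⟩ := hx01
    constructor
    · -- Lval μ a - ε ≤ Lval μ x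
      rcases le_total a x with hax | hxa
      · exact le_trans (tsub_le_self) (Lval_mono' hax)
      · -- x ≤ a : use step with a₁ = x, a₂ = a
        have hfinx : Lval μ x ≠ ⊤ := ((Lval_mono' hxa).trans_lt (Lval_lt_top μ ha1)).ne
        have hstep := step_lemma μ (a₁ := x) (a₂ := a) (b := b) (η := η) (δ := δ)
          hx0.le hxa hab.le (by linarith) hfinx hkey
        rw [tsub_le_iff_right]
        calc Lval μ a ≤ Lval μ x + ENNReal.ofReal η := hstep
          _ ≤ Lval μ x + ε := by gcongr
    · -- Lval μ x ≤ Lval μ a + ε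
      rcases le_total x a with hxa | hax
      · exact (Lval_mono' hxa).trans le_self_add
      · have hstep := step_lemma μ (a₁ := a) (a₂ := x) (b := b) (η := η) (δ := δ)
          ha0.le hax (by linarith) (by linarith) hfin hkey
        calc Lval μ x ≤ Lval μ a + ENNReal.ofReal η := hstep
          _ ≤ Lval μ a + ε := by gcongr


end
end

section
/- For every n ≥ 1, every 0 < λ < 1 and every ε > 0, there exists a Borel set B ⊆ [0,1]ⁿ with Vol(B) ≥ λ such that for every line ℓ ⊆ ℝⁿ one has |ℓ ∩ B| ≤ λ·|ℓ ∩ [0,1]ⁿ| + ε. -/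
open MeasureTheory ENNReal

noncomputable section

/-- The cube `[0,1]ⁿ`. -/
def UnitCube (n : ℕ) : Set (EucSp n) := {x | ∀ i, x i ∈ Set.Icc (0 : ℝ) 1}

namespace S14
open Real Set

def rr (A c : ℝ) (s : ℝ) : ℝ := Real.sqrt (max (s - c) 0) / Real.sqrt A

lemma rr_nonneg (A c s : ℝ) : 0 ≤ rr A c s :=
  div_nonneg (Real.sqrt_nonneg _) (Real.sqrt_nonneg _)

lemma rr_mono (A c : ℝ) : Monotone (rr A c) := by
  intro s t h
  unfold rr
  have h2 : max (s - c) 0 ≤ max (t - c) 0 := max_le_max (by linarith) le_rfl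
  exact div_le_div_of_nonneg_right (Real.sqrt_le_sqrt h2) (Real.sqrt_nonneg A) |>.trans le_rfl

lemma sqrt_add_le' (a b : ℝ) (ha : 0 ≤ a) (hb : 0 ≤ b) :
    Real.sqrt (a + b) ≤ Real.sqrt a + Real.sqrt b := by
  have h := Real.sqrt_le_sqrt (show a + b ≤ (Real.sqrt a + Real.sqrt b) ^ 2 by
    nlinarith [Real.sq_sqrt ha, Real.sq_sqrt hb,
      mul_nonneg (Real.sqrt_nonneg a) (Real.sqrt_nonneg b)])
  rwa [Real.sqrt_sq (by positivity)] at h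

lemma rr_step (A c : ℝ) (u s : ℝ) (hu : 0 ≤ u) :
    rr A c s ≤ rr A c (s - u) + Real.sqrt u / Real.sqrt A := by
  have key : Real.sqrt (max (s - c) 0) ≤ Real.sqrt (max (s - u - c) 0) + Real.sqrt u := by
    calc Real.sqrt (max (s - c) 0) ≤ Real.sqrt (max (s - u - c) 0 + u) := by
          apply Real.sqrt_le_sqrt
          rcases le_total (s - c) 0 with h | h
          · rw [max_eq_right h]; positivity
          · calc max (s - c) 0 = s - c := max_eq_left h
              _ ≤ max (s - u - c) 0 + u := by
                rcases le_total (s - u - c) 0 with h2 | h2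
                · rw [max_eq_right h2]; linarith
                · rw [max_eq_left h2]; linarith
      _ ≤ Real.sqrt (max (s - u - c) 0) + Real.sqrt u :=
          sqrt_add_le' _ _ (le_max_right _ _) hu
  unfold rr
  rw [← add_div]
  exact div_le_div_of_nonneg_right key (Real.sqrt_nonneg A)

lemma rr_of_sq (A c w : ℝ) (hA : 0 < A) (hw : 0 ≤ w) :
    rr A c (A * w ^ 2 + c) = w := by
  unfold rr
  rw [show A * w ^ 2 + c - c = A * w ^ 2 by ring, max_eq_left (by positivity),
    Real.sqrt_mul hA.le, Real.sqrt_sq hw,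
    mul_div_cancel_left₀ _ (by positivity : Real.sqrt A ≠ 0)]

lemma step_upper (x lam : ℝ) (hx : 1 ≤ x) (h0 : 0 ≤ lam) (h1 : lam ≤ 1) :
    Real.sqrt (x + lam) - Real.sqrt x ≤ lam * (Real.sqrt x - Real.sqrt (x - 1)) := by
  set a := Real.sqrt (x - 1) with ha
  set b := Real.sqrt x with hb
  set c := Real.sqrt (x + lam) with hc
  have ha2 : a ^ 2 = x - 1 := Real.sq_sqrt (by linarith)
  have hb2 : b ^ 2 = x := Real.sq_sqrt (by linarith)
  have hc2 : c ^ 2 = x + lam := Real.sq_sqrt (by linarith)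
  have ha0 : 0 ≤ a := Real.sqrt_nonneg _
  have hab : a ≤ b := Real.sqrt_le_sqrt (by linarith)
  have hbc : b ≤ c := Real.sqrt_le_sqrt (by linarith)
  have hb1 : 1 ≤ b := by nlinarith
  nlinarith [mul_nonneg (sub_nonneg.2 hbc) (sub_nonneg.2 hab), sq_nonneg (c - b)]

lemma step_lower (x lam : ℝ) (hx : 0 ≤ x) (h0 : 0 ≤ lam) (h1 : lam ≤ 1) :
    lam * (Real.sqrt (x + 1) - Real.sqrt x) ≤ Real.sqrt (x + lam) - Real.sqrt x := by
  set a := Real.sqrt x with ha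
  set b := Real.sqrt (x + lam) with hb
  set c := Real.sqrt (x + 1) with hc
  have ha2 : a ^ 2 = x := Real.sq_sqrt (by linarith)
  have hb2 : b ^ 2 = x + lam := Real.sq_sqrt (by linarith)
  have hc2 : c ^ 2 = x + 1 := Real.sq_sqrt (by linarith)
  have ha0 : 0 ≤ a := Real.sqrt_nonneg _
  have hab : a ≤ b := Real.sqrt_le_sqrt (by linarith)
  have hbc : b ≤ c := Real.sqrt_le_sqrt (by linarith)
  have hc1 : 1 ≤ c := by nlinarith
  nlinarith [mul_nonneg (sub_nonneg.2 hab) (sub_nonneg.2 hbc), sq_nonneg (b - a)]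

lemma tele (f : ℤ → ℝ) (m M : ℤ) (h : m ≤ M + 1) :
    ∑ k ∈ Finset.Icc m M, (f (k + 1) - f k) = f (M + 1) - f m := by
  obtain ⟨d, rfl⟩ : ∃ d : ℕ, M = m - 1 + d := ⟨(M - (m - 1)).toNat, by omega⟩
  induction d with
  | zero =>
    have : Finset.Icc m (m - 1 + (0 : ℕ)) = ∅ := Finset.Icc_eq_empty (by omega)
    have h0 : (m - 1 + (0 : ℕ) : ℤ) + 1 = m := by push_cast; ring
    rw [this, Finset.sum_empty, h0, sub_self]
  | succ d ih =>
    have hins : Finset.Icc m (m - 1 + (d + 1 : ℕ)) =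
        insert (m - 1 + (d + 1 : ℕ)) (Finset.Icc m (m - 1 + (d : ℕ))) := by
      ext k
      simp only [Finset.mem_Icc, Finset.mem_insert]
      omega
    rw [hins, Finset.sum_insert (by simp only [Finset.mem_Icc]; omega),
      ih (by omega)]
    have e1 : m - 1 + ((d : ℕ) + 1 : ℕ) + 1 = m - 1 + (d : ℕ) + 1 + 1 := by push_cast; ring
    have e2 : (m - 1 + ((d : ℕ) + 1 : ℕ) : ℤ) = m - 1 + (d : ℕ) + 1 := by push_cast; ring
    rw [e1, e2]
    ring

lemma sqrt_four : Real.sqrt 4 = 2 := by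
  rw [show (4 : ℝ) = 2 ^ 2 by norm_num, Real.sqrt_sq (by norm_num)]

lemma key_upper (A c₀ lam : ℝ) (hA : 1 ≤ A) (h0 : 0 ≤ lam) (h1 : lam ≤ 1) (k : ℤ) :
    rr A c₀ ((k : ℝ) + lam) - rr A c₀ (k : ℝ) ≤
      lam * (rr A c₀ (k : ℝ) - rr A c₀ ((k : ℝ) - 1)) +
        (if k = ⌊c₀⌋ ∨ k = ⌊c₀⌋ + 1 then 2 / Real.sqrt A else 0) := by
  have hsA : (0 : ℝ) < Real.sqrt A := Real.sqrt_pos.2 (by linarith)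
  have hfl : (⌊c₀⌋ : ℝ) ≤ c₀ := Int.floor_le c₀
  have hfl2 : c₀ < (⌊c₀⌋ : ℝ) + 1 := Int.lt_floor_add_one c₀
  by_cases hbig : ⌊c₀⌋ + 2 ≤ k
  · have hkr : ((⌊c₀⌋ : ℝ) + 2) ≤ (k : ℝ) := by exact_mod_cast hbig
    have hx1 : (1 : ℝ) ≤ (k : ℝ) - c₀ := by linarith
    set x := (k : ℝ) - c₀ with hxdef
    have E1 : rr A c₀ ((k : ℝ) + lam) = Real.sqrt (x + lam) / Real.sqrt A := by
      unfold rr; rw [show (k : ℝ) + lam - c₀ = x + lam by rw [hxdef]; ring,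
        max_eq_left (by linarith)]
    have E2 : rr A c₀ (k : ℝ) = Real.sqrt x / Real.sqrt A := by
      unfold rr; rw [show (k : ℝ) - c₀ = x from rfl, max_eq_left (by linarith)]
    have E3 : rr A c₀ ((k : ℝ) - 1) = Real.sqrt (x - 1) / Real.sqrt A := by
      unfold rr; rw [show (k : ℝ) - 1 - c₀ = x - 1 by rw [hxdef]; ring,
        max_eq_left (by linarith)]
    rw [E1, E2, E3]
    have hs := step_upper x lam hx1 h0 h1
    have hmain : Real.sqrt (x + lam) / Real.sqrt A - Real.sqrt x / Real.sqrt A ≤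
        lam * (Real.sqrt x / Real.sqrt A - Real.sqrt (x - 1) / Real.sqrt A) := by
      rw [div_sub_div_same, div_sub_div_same, ← mul_div_assoc]
      exact div_le_div_of_nonneg_right hs hsA.le |>.trans le_rfl
    have hif : (0 : ℝ) ≤ (if k = ⌊c₀⌋ ∨ k = ⌊c₀⌋ + 1 then 2 / Real.sqrt A else 0) := by
      split_ifs <;> positivity
    linarith
  · by_cases hbot : k ≤ ⌊c₀⌋ - 1
    · have hkr : (k : ℝ) ≤ (⌊c₀⌋ : ℝ) - 1 := by exact_mod_cast hbot
      have E1 : rr A c₀ ((k : ℝ) + lam) = 0 := by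
        unfold rr; rw [max_eq_right (by linarith)]; simp
      have E2 : rr A c₀ (k : ℝ) = 0 := by
        unfold rr; rw [max_eq_right (by linarith)]; simp
      have E3 : rr A c₀ ((k : ℝ) - 1) = 0 := by
        unfold rr; rw [max_eq_right (by linarith)]; simp
      rw [E1, E2, E3]
      have hif : (0 : ℝ) ≤ (if k = ⌊c₀⌋ ∨ k = ⌊c₀⌋ + 1 then 2 / Real.sqrt A else 0) := by
        split_ifs <;> positivity
      simp only [sub_self, mul_zero, zero_add]
      exact hif
    · have hk : k = ⌊c₀⌋ ∨ k = ⌊c₀⌋ + 1 := by omega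
      rw [if_pos hk]
      have hkr : (k : ℝ) ≤ (⌊c₀⌋ : ℝ) + 1 := by
        rcases hk with h | h <;> simp [h]
      have h2 : rr A c₀ ((k : ℝ) + lam) ≤ 2 / Real.sqrt A := by
        unfold rr
        have hmax : max ((k : ℝ) + lam - c₀) 0 ≤ 4 :=
          max_le (by linarith) (by norm_num)
        have := Real.sqrt_le_sqrt hmax
        rw [sqrt_four] at this
        exact div_le_div_of_nonneg_right this hsA.le |>.trans le_rfl
      have h3 : 0 ≤ rr A c₀ (k : ℝ) := rr_nonneg _ _ _
      have h4 : 0 ≤ lam * (rr A c₀ (k : ℝ) - rr A c₀ ((k : ℝ) - 1)) :=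
        mul_nonneg h0 (sub_nonneg.2 (rr_mono _ _ (by linarith)))
      linarith

lemma branch_upper (A lam c₀ t₀ α β : ℝ) (hA : 1 ≤ A) (h0 : 0 ≤ lam) (h1 : lam ≤ 1) :
    volume {t : ℝ | t ∈ Set.Icc α β ∧ t₀ ≤ t ∧ Int.fract (A * (t - t₀) ^ 2 + c₀) < lam}
      ≤ ENNReal.ofReal (lam * max (β - max α t₀) 0 + 6 / Real.sqrt A) := by
  have hA0 : (0 : ℝ) < A := by linarith
  have hsA : (0 : ℝ) < Real.sqrt A := Real.sqrt_pos.2 hA0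
  set α' := max α t₀ with hα'
  by_cases hab : β < α'
  · have he : {t : ℝ | t ∈ Set.Icc α β ∧ t₀ ≤ t ∧ Int.fract (A * (t - t₀) ^ 2 + c₀) < lam}
        = ∅ := by
      ext t
      simp only [Set.mem_setOf_eq, Set.mem_Icc, Set.mem_empty_iff_false, iff_false]
      rintro ⟨⟨h1t, h2t⟩, h3t, -⟩
      have : α' ≤ t := max_le h1t h3t
      linarith
    rw [he]
    simp
  · push_neg at hab
    have ht₀α' : t₀ ≤ α' := le_max_right _ _
    have hmono : ∀ s t : ℝ, t₀ ≤ s → s ≤ t →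
        A * (s - t₀) ^ 2 + c₀ ≤ A * (t - t₀) ^ 2 + c₀ := by
      intro s t hs hst
      nlinarith [mul_nonneg (mul_nonneg hA0.le (sub_nonneg.2 hst))
        (show (0:ℝ) ≤ t + s - 2 * t₀ by linarith)]
    set m := ⌊A * (α' - t₀) ^ 2 + c₀⌋ with hm
    set M := ⌊A * (β - t₀) ^ 2 + c₀⌋ with hM
    have hmM : m ≤ M := Int.floor_le_floor (hmono α' β ht₀α' hab)
    have hincl : {t : ℝ | t ∈ Set.Icc α β ∧ t₀ ≤ t ∧ Int.fract (A * (t - t₀) ^ 2 + c₀) < lam}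
        ⊆ ⋃ k ∈ Finset.Icc m M,
            Set.Ico (t₀ + rr A c₀ (k : ℝ)) (t₀ + rr A c₀ ((k : ℝ) + lam)) := by
      rintro t ⟨⟨htα, htβ⟩, htt₀, hfr⟩
      have hα't : α' ≤ t := max_le htα htt₀
      set k := ⌊A * (t - t₀) ^ 2 + c₀⌋ with hk
      have hkm : m ≤ k := Int.floor_le_floor (hmono α' t ht₀α' hα't)
      have hkM : k ≤ M := Int.floor_le_floor (hmono t β htt₀ htβ)
      have hfl : (k : ℝ) ≤ A * (t - t₀) ^ 2 + c₀ := Int.floor_le _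
      have hfr' : A * (t - t₀) ^ 2 + c₀ < (k : ℝ) + lam := by
        have := Int.self_sub_floor (A * (t - t₀) ^ 2 + c₀)
        rw [← hk] at this
        linarith [hfr, this.symm ▸ hfr]
      simp only [Set.mem_iUnion, Finset.mem_Icc, exists_prop]
      refine ⟨k, ⟨hkm, hkM⟩, ?_, ?_⟩
      · -- t₀ + rr k ≤ t
        have h1 : max ((k : ℝ) - c₀) 0 ≤ A * (t - t₀) ^ 2 :=
          max_le (by linarith) (by positivity)
        have h2 : Real.sqrt (max ((k : ℝ) - c₀) 0) ≤ Real.sqrt A * (t - t₀) := by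
          have := Real.sqrt_le_sqrt h1
          rwa [Real.sqrt_mul hA0.le, Real.sqrt_sq (by linarith)] at this
        have : rr A c₀ (k : ℝ) ≤ t - t₀ := by
          unfold rr
          rw [div_le_iff₀ hsA]
          linarith [h2]
        linarith
      · -- t < t₀ + rr (k+lam)
        have h1 : A * (t - t₀) ^ 2 < (k : ℝ) + lam - c₀ := by linarith
        have h2 : Real.sqrt A * (t - t₀) < Real.sqrt (max ((k : ℝ) + lam - c₀) 0) := by
          have h3 : Real.sqrt (A * (t - t₀) ^ 2) < Real.sqrt ((k : ℝ) + lam - c₀) :=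
            Real.sqrt_lt_sqrt (by positivity) h1
          rw [Real.sqrt_mul hA0.le, Real.sqrt_sq (by linarith)] at h3
          exact h3.trans_le (Real.sqrt_le_sqrt (le_max_left _ _))
        have : t - t₀ < rr A c₀ ((k : ℝ) + lam) := by
          unfold rr
          rw [lt_div_iff₀ hsA]
          linarith [h2]
        linarith
    calc volume {t : ℝ | t ∈ Set.Icc α β ∧ t₀ ≤ t ∧ Int.fract (A * (t - t₀) ^ 2 + c₀) < lam}
        ≤ volume (⋃ k ∈ Finset.Icc m M,
            Set.Ico (t₀ + rr A c₀ (k : ℝ)) (t₀ + rr A c₀ ((k : ℝ) + lam))) :=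
          measure_mono hincl
      _ ≤ ∑ k ∈ Finset.Icc m M,
            volume (Set.Ico (t₀ + rr A c₀ (k : ℝ)) (t₀ + rr A c₀ ((k : ℝ) + lam))) :=
          measure_biUnion_finset_le _ _
      _ = ∑ k ∈ Finset.Icc m M,
            ENNReal.ofReal (rr A c₀ ((k : ℝ) + lam) - rr A c₀ (k : ℝ)) := by
          refine Finset.sum_congr rfl fun k _ => ?_
          rw [Real.volume_Ico]
          congr 1
          ring
      _ = ENNReal.ofReal (∑ k ∈ Finset.Icc m M,
            (rr A c₀ ((k : ℝ) + lam) - rr A c₀ (k : ℝ))) := by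
          rw [ENNReal.ofReal_sum_of_nonneg]
          intro k _
          exact sub_nonneg.2 (rr_mono A c₀ (by linarith))
      _ ≤ ENNReal.ofReal (lam * max (β - α') 0 + 6 / Real.sqrt A) := by
          apply ENNReal.ofReal_le_ofReal
          -- real-number estimate
          have hsum1 : ∑ k ∈ Finset.Icc m M, (rr A c₀ ((k : ℝ) + lam) - rr A c₀ (k : ℝ))
              ≤ ∑ k ∈ Finset.Icc m M, (lam * (rr A c₀ (k : ℝ) - rr A c₀ ((k : ℝ) - 1)) +
                (if k = ⌊c₀⌋ ∨ k = ⌊c₀⌋ + 1 then 2 / Real.sqrt A else 0)) :=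
            Finset.sum_le_sum fun k _ => key_upper A c₀ lam hA h0 h1 k
          have hsum2 : ∑ k ∈ Finset.Icc m M, (lam * (rr A c₀ (k : ℝ) - rr A c₀ ((k : ℝ) - 1)))
              = lam * (rr A c₀ (M : ℝ) - rr A c₀ ((m : ℝ) - 1)) := by
            rw [← Finset.mul_sum]
            congr 1
            have := tele (fun k : ℤ => rr A c₀ ((k : ℝ) - 1)) m M (by omega)
            calc ∑ k ∈ Finset.Icc m M, (rr A c₀ (k : ℝ) - rr A c₀ ((k : ℝ) - 1))
                = ∑ k ∈ Finset.Icc m M,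
                    (rr A c₀ (((k + 1 : ℤ) : ℝ) - 1) - rr A c₀ ((k : ℝ) - 1)) := by
                  refine Finset.sum_congr rfl fun k _ => ?_
                  congr 2
                  push_cast; ring
              _ = rr A c₀ (((M + 1 : ℤ) : ℝ) - 1) - rr A c₀ ((m : ℝ) - 1) := this
              _ = rr A c₀ (M : ℝ) - rr A c₀ ((m : ℝ) - 1) := by
                  congr 2
                  push_cast; ring
          have hsum3 : ∑ k ∈ Finset.Icc m M,
              (if k = ⌊c₀⌋ ∨ k = ⌊c₀⌋ + 1 then 2 / Real.sqrt A else 0) ≤ 4 / Real.sqrt A := by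
            have hpt : ∀ k ∈ Finset.Icc m M,
                (if k = ⌊c₀⌋ ∨ k = ⌊c₀⌋ + 1 then 2 / Real.sqrt A else 0) ≤
                  (if k = ⌊c₀⌋ then 2 / Real.sqrt A else 0) +
                  (if k = ⌊c₀⌋ + 1 then 2 / Real.sqrt A else 0) := by
              intro k _
              split_ifs with h1' h2' h3' <;> first | positivity | (try rcases h1' with h | h) <;>
                simp_all <;> positivity
            calc _ ≤ ∑ k ∈ Finset.Icc m M, ((if k = ⌊c₀⌋ then 2 / Real.sqrt A else 0) +
                  (if k = ⌊c₀⌋ + 1 then 2 / Real.sqrt A else 0)) := Finset.sum_le_sum hpt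
              _ = (∑ k ∈ Finset.Icc m M, (if k = ⌊c₀⌋ then 2 / Real.sqrt A else 0)) +
                  (∑ k ∈ Finset.Icc m M, (if k = ⌊c₀⌋ + 1 then 2 / Real.sqrt A else 0)) :=
                  Finset.sum_add_distrib
              _ ≤ 2 / Real.sqrt A + 2 / Real.sqrt A := by
                  gcongr <;>
                  · rw [Finset.sum_ite_eq' (Finset.Icc m M)]
                    split_ifs <;> first | exact le_rfl | positivity
              _ = 4 / Real.sqrt A := by ring
          have hrM : rr A c₀ (M : ℝ) ≤ β - t₀ := by
            have h1 : (M : ℝ) ≤ A * (β - t₀) ^ 2 + c₀ := Int.floor_le _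
            have := rr_mono A c₀ h1
            rwa [rr_of_sq A c₀ (β - t₀) hA0 (by linarith)] at this
          have hrm : α' - t₀ - 2 / Real.sqrt A ≤ rr A c₀ ((m : ℝ) - 1) := by
            have h1 : A * (α' - t₀) ^ 2 + c₀ - 2 ≤ (m : ℝ) - 1 := by
              have := Int.sub_one_lt_floor (A * (α' - t₀) ^ 2 + c₀)
              linarith
            have h2 := rr_mono A c₀ h1
            have h3 := rr_step A c₀ 2 (A * (α' - t₀) ^ 2 + c₀) (by norm_num)
            rw [rr_of_sq A c₀ (α' - t₀) hA0 (by linarith)] at h3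
            have hs2 : Real.sqrt 2 ≤ 2 := by
              have := Real.sqrt_le_sqrt (show (2 : ℝ) ≤ 4 by norm_num)
              rwa [sqrt_four] at this
            have : Real.sqrt 2 / Real.sqrt A ≤ 2 / Real.sqrt A :=
              div_le_div_of_nonneg_right hs2 hsA.le |>.trans le_rfl
            linarith
          have hmax : β - α' = max (β - α') 0 := (max_eq_left (by linarith)).symm
          have hfin : lam * (rr A c₀ (M : ℝ) - rr A c₀ ((m : ℝ) - 1)) ≤
              lam * (β - α') + 2 / Real.sqrt A := by
            have h1 : rr A c₀ (M : ℝ) - rr A c₀ ((m : ℝ) - 1) ≤ β - α' + 2 / Real.sqrt A := by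
              linarith
            have h2 : lam * (rr A c₀ (M : ℝ) - rr A c₀ ((m : ℝ) - 1)) ≤
                lam * (β - α' + 2 / Real.sqrt A) := by
              apply mul_le_mul_of_nonneg_left h1 h0
            nlinarith [div_nonneg (by norm_num : (0:ℝ) ≤ 2) hsA.le]
          calc ∑ k ∈ Finset.Icc m M, (rr A c₀ ((k : ℝ) + lam) - rr A c₀ (k : ℝ))
              ≤ lam * (rr A c₀ (M : ℝ) - rr A c₀ ((m : ℝ) - 1)) + 4 / Real.sqrt A := by
                rw [Finset.sum_add_distrib] at hsum1
                rw [hsum2] at hsum1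
                linarith
            _ ≤ lam * (β - α') + 2 / Real.sqrt A + 4 / Real.sqrt A := by linarith
            _ ≤ lam * max (β - α') 0 + 6 / Real.sqrt A := by
                rw [← hmax]; ring_nf; linarith

lemma fract_meas (A c₀ t₀ lam : ℝ) :
    MeasurableSet {u : ℝ | Int.fract (A * (u - t₀) ^ 2 + c₀) < lam} := by
  have hm : Measurable fun u : ℝ => Int.fract (A * (u - t₀) ^ 2 + c₀) :=
    measurable_fract.comp (by fun_prop)
  exact hm measurableSet_Iio

lemma quad_upper (A lam c₀ t₀ α β : ℝ) (hA : 1 ≤ A) (h0 : 0 ≤ lam) (h1 : lam ≤ 1) :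
    volume {t : ℝ | t ∈ Set.Icc α β ∧ Int.fract (A * (t - t₀) ^ 2 + c₀) < lam}
      ≤ ENNReal.ofReal (lam * (β - α) + 12 / Real.sqrt A) := by
  by_cases hab : α ≤ β
  swap
  · push_neg at hab
    have he : {t : ℝ | t ∈ Set.Icc α β ∧ Int.fract (A * (t - t₀) ^ 2 + c₀) < lam} = ∅ := by
      ext t
      simp only [Set.mem_setOf_eq, Set.mem_Icc, Set.mem_empty_iff_false, iff_false]
      rintro ⟨⟨h1t, h2t⟩, -⟩
      linarith
    rw [he]
    simp
  have hsA : (0 : ℝ) < Real.sqrt A := Real.sqrt_pos.2 (by linarith)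
  set Sr := {t : ℝ | t ∈ Set.Icc α β ∧ t₀ ≤ t ∧ Int.fract (A * (t - t₀) ^ 2 + c₀) < lam}
    with hSrdef
  set Sr' := {u : ℝ | u ∈ Set.Icc (2 * t₀ - β) (2 * t₀ - α) ∧ t₀ ≤ u ∧
      Int.fract (A * (u - t₀) ^ 2 + c₀) < lam} with hSr'def
  set Sl := {t : ℝ | t ∈ Set.Icc α β ∧ t ≤ t₀ ∧ Int.fract (A * (t - t₀) ^ 2 + c₀) < lam}
    with hSldef
  have hsplit : {t : ℝ | t ∈ Set.Icc α β ∧ Int.fract (A * (t - t₀) ^ 2 + c₀) < lam}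
      ⊆ Sr ∪ Sl := by
    intro t ⟨ht1, ht2⟩
    rcases le_total t₀ t with h | h
    · exact Or.inl ⟨ht1, h, ht2⟩
    · exact Or.inr ⟨ht1, h, ht2⟩
  have hSl : Sl = (fun t : ℝ => 2 * t₀ - t) ⁻¹' Sr' := by
    have harg : ∀ t : ℝ, A * (2 * t₀ - t - t₀) ^ 2 + c₀ = A * (t - t₀) ^ 2 + c₀ :=
      fun t => by ring
    ext t
    simp only [hSldef, hSr'def, Set.mem_setOf_eq, Set.mem_Icc, Set.mem_preimage, harg t]
    constructor
    · rintro ⟨⟨h1t, h2t⟩, h3t, h4t⟩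
      exact ⟨⟨by linarith, by linarith⟩, by linarith, h4t⟩
    · rintro ⟨⟨h1t, h2t⟩, h3t, h4t⟩
      exact ⟨⟨by linarith, by linarith⟩, by linarith, h4t⟩
  have hmSr' : MeasurableSet Sr' := by
    have : Sr' = (Set.Icc (2 * t₀ - β) (2 * t₀ - α) ∩ Set.Ici t₀) ∩
        {u : ℝ | Int.fract (A * (u - t₀) ^ 2 + c₀) < lam} := by
      ext u
      simp only [hSr'def, Set.mem_setOf_eq, Set.mem_Icc, Set.mem_inter_iff, Set.mem_Ici]
      tauto
    rw [this]
    exact (measurableSet_Icc.inter measurableSet_Ici).inter (fract_meas A c₀ t₀ lam)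
  have hvolSl : volume Sl = volume Sr' := by
    rw [hSl]
    exact (MeasureTheory.Measure.measurePreserving_sub_left volume (2 * t₀)).measure_preimage
      hmSr'.nullMeasurableSet
  have hbr : volume Sr ≤ ENNReal.ofReal (lam * max (β - max α t₀) 0 + 6 / Real.sqrt A) :=
    branch_upper A lam c₀ t₀ α β hA h0 h1
  have hbl : volume Sr' ≤ ENNReal.ofReal
      (lam * max ((2 * t₀ - α) - max (2 * t₀ - β) t₀) 0 + 6 / Real.sqrt A) :=
    branch_upper A lam c₀ t₀ (2 * t₀ - β) (2 * t₀ - α) hA h0 h1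
  have hPQ : lam * max (β - max α t₀) 0 + lam * max ((2 * t₀ - α) - max (2 * t₀ - β) t₀) 0
      ≤ lam * (β - α) := by
    have h2 : max (β - max α t₀) 0 + max ((2 * t₀ - α) - max (2 * t₀ - β) t₀) 0 ≤ β - α := by
      simp only [max_def]
      split_ifs <;> linarith
    nlinarith [le_max_right (β - max α t₀) 0,
      le_max_right ((2 * t₀ - α) - max (2 * t₀ - β) t₀) 0]
  calc volume {t : ℝ | t ∈ Set.Icc α β ∧ Int.fract (A * (t - t₀) ^ 2 + c₀) < lam}
      ≤ volume (Sr ∪ Sl) := measure_mono hsplit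
    _ ≤ volume Sr + volume Sl := measure_union_le _ _
    _ = volume Sr + volume Sr' := by rw [hvolSl]
    _ ≤ ENNReal.ofReal (lam * max (β - max α t₀) 0 + 6 / Real.sqrt A) +
        ENNReal.ofReal (lam * max ((2 * t₀ - α) - max (2 * t₀ - β) t₀) 0 + 6 / Real.sqrt A) :=
        add_le_add hbr hbl
    _ = ENNReal.ofReal ((lam * max (β - max α t₀) 0 + 6 / Real.sqrt A) +
        (lam * max ((2 * t₀ - α) - max (2 * t₀ - β) t₀) 0 + 6 / Real.sqrt A)) :=
        (ENNReal.ofReal_add (by positivity) (by positivity)).symm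
    _ ≤ ENNReal.ofReal (lam * (β - α) + 12 / Real.sqrt A) := by
        apply ENNReal.ofReal_le_ofReal
        have : (6 : ℝ) / Real.sqrt A + 6 / Real.sqrt A = 12 / Real.sqrt A := by ring
        linarith

lemma quad_lower (A lam c₀ : ℝ) (hA : 1 ≤ A) (h0 : 0 ≤ lam) (h1 : lam ≤ 1) :
    ENNReal.ofReal (lam - 2 / Real.sqrt A) ≤
      volume {t : ℝ | t ∈ Set.Icc (0 : ℝ) 1 ∧ Int.fract (A * t ^ 2 + c₀) < lam} := by
  have hA0 : (0 : ℝ) < A := by linarith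
  have hsA : (0 : ℝ) < Real.sqrt A := Real.sqrt_pos.2 hA0
  have hfl : (⌊c₀⌋ : ℝ) ≤ c₀ := Int.floor_le c₀
  have hfl2 : c₀ < (⌊c₀⌋ : ℝ) + 1 := Int.lt_floor_add_one c₀
  set m := ⌊c₀⌋ + 1 with hm
  set M := ⌊A + c₀⌋ - 1 with hM
  have hflA : (⌊A + c₀⌋ : ℝ) ≤ A + c₀ := Int.floor_le _
  have hflA2 : A + c₀ - 1 < (⌊A + c₀⌋ : ℝ) := by
    have := Int.sub_one_lt_floor (A + c₀)
    linarith
  have hmM1 : m ≤ M + 1 := by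
    have : (⌊c₀⌋ : ℝ) + 1 < (⌊A + c₀⌋ : ℝ) + 1 := by linarith
    have := (by exact_mod_cast this : (⌊c₀⌋ : ℤ) + 1 < ⌊A + c₀⌋ + 1)
    omega
  -- the union is inside the set
  have hsub : (⋃ k ∈ Finset.Icc m M,
      Set.Ico (rr A c₀ (k : ℝ)) (rr A c₀ ((k : ℝ) + lam)))
      ⊆ {t : ℝ | t ∈ Set.Icc (0 : ℝ) 1 ∧ Int.fract (A * t ^ 2 + c₀) < lam} := by
    intro t ht
    simp only [Set.mem_iUnion, Finset.mem_Icc, exists_prop] at ht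
    obtain ⟨k, ⟨hkm, hkM⟩, h1t, h2t⟩ := ht
    have hmk : (⌊c₀⌋ : ℝ) + 1 ≤ (k : ℝ) := by exact_mod_cast hkm
    have hc₀k : c₀ < (k : ℝ) := by linarith
    have ht0 : (0 : ℝ) ≤ t := (rr_nonneg A c₀ _).trans h1t
    have hk1 : (k : ℝ) + 1 ≤ A + c₀ := by
      have : (k : ℝ) ≤ (M : ℝ) := by exact_mod_cast hkM
      have hMr : (M : ℝ) = (⌊A + c₀⌋ : ℝ) - 1 := by push_cast [hM]; ring
      linarith
    have ht1 : t ≤ 1 := by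
      have h3 : rr A c₀ ((k : ℝ) + lam) ≤ rr A c₀ (A * 1 ^ 2 + c₀) := by
        apply rr_mono
        nlinarith
      rw [rr_of_sq A c₀ 1 hA0 (by norm_num)] at h3
      linarith [h2t.le.trans h3]
    -- squares
    have hsq1 : rr A c₀ (k : ℝ) ^ 2 = ((k : ℝ) - c₀) / A := by
      unfold rr
      rw [div_pow, Real.sq_sqrt (le_max_right _ _), Real.sq_sqrt hA0.le,
        max_eq_left (by linarith)]
    have hsq2 : rr A c₀ ((k : ℝ) + lam) ^ 2 = ((k : ℝ) + lam - c₀) / A := by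
      unfold rr
      rw [div_pow, Real.sq_sqrt (le_max_right _ _), Real.sq_sqrt hA0.le,
        max_eq_left (by linarith)]
    have key1 : (k : ℝ) ≤ A * t ^ 2 + c₀ := by
      have := pow_le_pow_left₀ (rr_nonneg A c₀ _) h1t 2
      rw [hsq1] at this
      have := (div_le_iff₀ hA0).mp this
      nlinarith
    have key2 : A * t ^ 2 + c₀ < (k : ℝ) + lam := by
      have := pow_lt_pow_left₀ h2t ht0 (two_ne_zero)
      rw [hsq2] at this
      have := (lt_div_iff₀ hA0).mp this
      nlinarith
    have hfloor : ⌊A * t ^ 2 + c₀⌋ = k := by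
      rw [Int.floor_eq_iff]
      constructor
      · exact_mod_cast key1
      · push_cast
        linarith
    have hfr : Int.fract (A * t ^ 2 + c₀) = A * t ^ 2 + c₀ - (k : ℝ) := by
      rw [Int.fract, hfloor]
    exact ⟨⟨ht0, ht1⟩, by rw [hfr]; linarith⟩
  -- disjointness
  have hdisj : Set.PairwiseDisjoint ↑(Finset.Icc m M)
      (fun k : ℤ => Set.Ico (rr A c₀ (k : ℝ)) (rr A c₀ ((k : ℝ) + lam))) := by
    intro i hi j hj hij
    have key : ∀ i j : ℤ, i < j → Disjoint
        (Set.Ico (rr A c₀ (i : ℝ)) (rr A c₀ ((i : ℝ) + lam)))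
        (Set.Ico (rr A c₀ (j : ℝ)) (rr A c₀ ((j : ℝ) + lam))) := by
      intro i j hlt
      apply Set.disjoint_left.2
      rintro t ⟨h1t, h2t⟩ ⟨h3t, h4t⟩
      have : rr A c₀ ((i : ℝ) + lam) ≤ rr A c₀ (j : ℝ) := by
        apply rr_mono
        have : (i : ℝ) + 1 ≤ (j : ℝ) := by exact_mod_cast hlt
        linarith
      linarith
    rcases lt_or_gt_of_ne hij with h | h
    · exact key i j h
    · exact (key j i h).symm
  have hvolK : volume (⋃ k ∈ Finset.Icc m M,
      Set.Ico (rr A c₀ (k : ℝ)) (rr A c₀ ((k : ℝ) + lam)))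
      = ∑ k ∈ Finset.Icc m M, ENNReal.ofReal (rr A c₀ ((k : ℝ) + lam) - rr A c₀ (k : ℝ)) := by
    rw [measure_biUnion_finset hdisj (fun k _ => measurableSet_Ico)]
    exact Finset.sum_congr rfl fun k _ => Real.volume_Ico
  -- lower bound on the sum
  have hsum : lam - 2 / Real.sqrt A ≤
      ∑ k ∈ Finset.Icc m M, (rr A c₀ ((k : ℝ) + lam) - rr A c₀ (k : ℝ)) := by
    have hper : ∀ k ∈ Finset.Icc m M,
        lam * (rr A c₀ ((k : ℝ) + 1) - rr A c₀ (k : ℝ)) ≤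
          rr A c₀ ((k : ℝ) + lam) - rr A c₀ (k : ℝ) := by
      intro k hk
      simp only [Finset.mem_Icc] at hk
      have hmk : (⌊c₀⌋ : ℝ) + 1 ≤ (k : ℝ) := by exact_mod_cast hk.1
      set x := (k : ℝ) - c₀ with hx
      have hx0 : 0 ≤ x := by simp only [hx]; linarith
      have E1 : rr A c₀ ((k : ℝ) + lam) = Real.sqrt (x + lam) / Real.sqrt A := by
        unfold rr
        rw [show (k : ℝ) + lam - c₀ = x + lam by rw [hx]; ring, max_eq_left (by linarith)]
      have E2 : rr A c₀ (k : ℝ) = Real.sqrt x / Real.sqrt A := by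
        unfold rr
        rw [show (k : ℝ) - c₀ = x from rfl, max_eq_left (by linarith)]
      have E3 : rr A c₀ ((k : ℝ) + 1) = Real.sqrt (x + 1) / Real.sqrt A := by
        unfold rr
        rw [show (k : ℝ) + 1 - c₀ = x + 1 by rw [hx]; ring, max_eq_left (by linarith)]
      rw [E1, E2, E3, div_sub_div_same, div_sub_div_same, ← mul_div_assoc]
      exact div_le_div_of_nonneg_right (step_lower x lam hx0 h0 h1) hsA.le |>.trans le_rfl
    have htele : ∑ k ∈ Finset.Icc m M, (rr A c₀ ((k : ℝ) + 1) - rr A c₀ (k : ℝ))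
        = rr A c₀ ((M : ℝ) + 1) - rr A c₀ (m : ℝ) := by
      have := tele (fun k : ℤ => rr A c₀ (k : ℝ)) m M hmM1
      calc ∑ k ∈ Finset.Icc m M, (rr A c₀ ((k : ℝ) + 1) - rr A c₀ (k : ℝ))
          = ∑ k ∈ Finset.Icc m M, (rr A c₀ (((k + 1 : ℤ) : ℝ)) - rr A c₀ (k : ℝ)) := by
            refine Finset.sum_congr rfl fun k _ => ?_
            congr 2
            push_cast; ring
        _ = rr A c₀ (((M + 1 : ℤ) : ℝ)) - rr A c₀ (m : ℝ) := this
        _ = rr A c₀ ((M : ℝ) + 1) - rr A c₀ (m : ℝ) := by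
            congr 2
            push_cast; ring
    have hrM : 1 - 1 / Real.sqrt A ≤ rr A c₀ ((M : ℝ) + 1) := by
      have hMr : (M : ℝ) + 1 = (⌊A + c₀⌋ : ℝ) := by push_cast [hM]; ring
      have h1' : A + c₀ - 1 ≤ (M : ℝ) + 1 := by rw [hMr]; linarith
      have h2' := rr_mono A c₀ h1'
      have h3' := rr_step A c₀ 1 (A + c₀) (by norm_num)
      have h4' : rr A c₀ (A + c₀) = 1 := by
        have := rr_of_sq A c₀ 1 hA0 (by norm_num)
        rw [show A * 1 ^ 2 + c₀ = A + c₀ by ring] at this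
        exact this
      rw [h4', Real.sqrt_one] at h3'
      linarith
    have hrm : rr A c₀ (m : ℝ) ≤ 1 / Real.sqrt A := by
      have hmr : (m : ℝ) = (⌊c₀⌋ : ℝ) + 1 := by push_cast [hm]; ring
      have h1' : (m : ℝ) ≤ c₀ + 1 := by rw [hmr]; linarith
      have h2' := rr_mono A c₀ h1'
      have h3' : rr A c₀ (c₀ + 1) = 1 / Real.sqrt A := by
        unfold rr
        rw [show c₀ + 1 - c₀ = (1 : ℝ) by ring, max_eq_left (by norm_num), Real.sqrt_one]
      rw [h3'] at h2'
      exact h2'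
    calc lam - 2 / Real.sqrt A ≤ lam * (rr A c₀ ((M : ℝ) + 1) - rr A c₀ (m : ℝ)) := by
          have h2s : (2:ℝ) / Real.sqrt A = 1 / Real.sqrt A + 1 / Real.sqrt A := by ring
          nlinarith [mul_le_mul_of_nonneg_left (show (1:ℝ) - 2 / Real.sqrt A ≤
              rr A c₀ ((M : ℝ) + 1) - rr A c₀ (m : ℝ) by linarith) h0,
            mul_nonneg (sub_nonneg.2 h1) (div_nonneg (by norm_num : (0:ℝ) ≤ 2) hsA.le)]
      _ = ∑ k ∈ Finset.Icc m M, lam * (rr A c₀ ((k : ℝ) + 1) - rr A c₀ (k : ℝ)) := by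
          rw [← Finset.mul_sum, htele]
      _ ≤ ∑ k ∈ Finset.Icc m M, (rr A c₀ ((k : ℝ) + lam) - rr A c₀ (k : ℝ)) :=
          Finset.sum_le_sum hper
  calc ENNReal.ofReal (lam - 2 / Real.sqrt A)
      ≤ ENNReal.ofReal (∑ k ∈ Finset.Icc m M,
          (rr A c₀ ((k : ℝ) + lam) - rr A c₀ (k : ℝ))) := ENNReal.ofReal_le_ofReal hsum
    _ = ∑ k ∈ Finset.Icc m M, ENNReal.ofReal (rr A c₀ ((k : ℝ) + lam) - rr A c₀ (k : ℝ)) := by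
        rw [ENNReal.ofReal_sum_of_nonneg]
        intro k _
        exact sub_nonneg.2 (rr_mono A c₀ (by linarith))
    _ = volume (⋃ k ∈ Finset.Icc m M,
          Set.Ico (rr A c₀ (k : ℝ)) (rr A c₀ ((k : ℝ) + lam))) := hvolK.symm
    _ ≤ volume {t : ℝ | t ∈ Set.Icc (0 : ℝ) 1 ∧ Int.fract (A * t ^ 2 + c₀) < lam} :=
        measure_mono hsub

lemma meas_s (m : ℕ) (N lam' : ℝ) :
    MeasurableSet {z : Fin m → ℝ | (∀ i, z i ∈ Set.Icc (0:ℝ) 1) ∧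
      Int.fract (N * ∑ i, (z i) ^ 2) < lam'} := by
  have h1 : MeasurableSet {z : Fin m → ℝ | ∀ i, z i ∈ Set.Icc (0:ℝ) 1} := by
    have : {z : Fin m → ℝ | ∀ i, z i ∈ Set.Icc (0:ℝ) 1} =
        Set.pi Set.univ (fun _ => Set.Icc (0:ℝ) 1) := by
      ext z
      simp only [Set.mem_setOf_eq, Set.mem_pi, Set.mem_univ, forall_true_left, true_implies]
    rw [this]
    exact MeasurableSet.univ_pi fun _ => measurableSet_Icc
  have h2 : Measurable fun z : Fin m → ℝ => Int.fract (N * ∑ i, (z i) ^ 2) :=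
    measurable_fract.comp (by fun_prop)
  exact h1.inter (h2 measurableSet_Iio)

lemma meas_B (m : ℕ) (N lam' : ℝ) :
    MeasurableSet {x : EucSp m | (∀ i, x i ∈ Set.Icc (0:ℝ) 1) ∧
      Int.fract (N * ∑ i, (x i) ^ 2) < lam'} := by
  have : {x : EucSp m | (∀ i, x i ∈ Set.Icc (0:ℝ) 1) ∧ Int.fract (N * ∑ i, (x i) ^ 2) < lam'}
      = (MeasurableEquiv.toLp 2 (Fin m → ℝ)).symm ⁻¹'
        {z : Fin m → ℝ | (∀ i, z i ∈ Set.Icc (0:ℝ) 1) ∧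
          Int.fract (N * ∑ i, (z i) ^ 2) < lam'} := rfl
  rw [this]
  exact (MeasurableEquiv.toLp 2 (Fin m → ℝ)).symm.measurable (meas_s m N lam')

lemma vol_lower (m : ℕ) (N lam' : ℝ) (hN : 1 ≤ N) (h0 : 0 ≤ lam') (h1 : lam' ≤ 1) :
    ENNReal.ofReal (lam' - 2 / Real.sqrt N) ≤
      volume {x : EucSp (m+1) | (∀ i, x i ∈ Set.Icc (0:ℝ) 1) ∧
        Int.fract (N * ∑ i, (x i) ^ 2) < lam'} := by
  set s : Set (Fin (m+1) → ℝ) := {z | (∀ i, z i ∈ Set.Icc (0:ℝ) 1) ∧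
    Int.fract (N * ∑ i, (z i) ^ 2) < lam'} with hsdef
  set u : Set (ℝ × (Fin m → ℝ)) := {p | (p.1 ∈ Set.Icc (0:ℝ) 1 ∧ ∀ j, p.2 j ∈ Set.Icc (0:ℝ) 1)
    ∧ Int.fract (N * (p.1 ^ 2 + ∑ j, (p.2 j) ^ 2)) < lam'} with hudef
  have hu : MeasurableSet u := by
    have h1' : MeasurableSet {p : ℝ × (Fin m → ℝ) | p.1 ∈ Set.Icc (0:ℝ) 1} :=
      measurable_fst measurableSet_Icc
    have h2' : MeasurableSet {p : ℝ × (Fin m → ℝ) | ∀ j, p.2 j ∈ Set.Icc (0:ℝ) 1} := by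
      have : {p : ℝ × (Fin m → ℝ) | ∀ j, p.2 j ∈ Set.Icc (0:ℝ) 1} =
          ⋂ j, {p : ℝ × (Fin m → ℝ) | p.2 j ∈ Set.Icc (0:ℝ) 1} := by
        ext p; simp
      rw [this]
      exact MeasurableSet.iInter fun j =>
        ((measurable_pi_apply j).comp measurable_snd) measurableSet_Icc
    have h3' : Measurable fun p : ℝ × (Fin m → ℝ) =>
        Int.fract (N * (p.1 ^ 2 + ∑ j, (p.2 j) ^ 2)) :=
      measurable_fract.comp (by fun_prop)
    exact (h1'.inter h2').inter (h3' measurableSet_Iio)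
  have hp : ∀ z : Fin (m+1) → ℝ, (MeasurableEquiv.piFinSuccAbove (fun _ => ℝ) 0) z
      = (z 0, fun j => z (Fin.succAbove 0 j)) := fun z => by
    simp [MeasurableEquiv.piFinSuccAbove]
    rfl
  have hspre : s = (MeasurableEquiv.piFinSuccAbove (fun _ => ℝ) 0) ⁻¹' u := by
    ext z
    rw [Set.mem_preimage, hp z]
    simp only [hudef, hsdef, Set.mem_setOf_eq, Fin.succAbove_zero]
    rw [Fin.forall_fin_succ, Fin.sum_univ_succ]
  -- compute the volume through the equivalences
  have hvol1 : volume {x : EucSp (m+1) | (∀ i, x i ∈ Set.Icc (0:ℝ) 1) ∧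
      Int.fract (N * ∑ i, (x i) ^ 2) < lam'} = volume s := by
    have : {x : EucSp (m+1) | (∀ i, x i ∈ Set.Icc (0:ℝ) 1) ∧
        Int.fract (N * ∑ i, (x i) ^ 2) < lam'}
        = (MeasurableEquiv.toLp 2 (Fin (m+1) → ℝ)).symm ⁻¹' s := rfl
    rw [this]
    exact (EuclideanSpace.volume_preserving_symm_measurableEquiv_toLp (Fin (m+1))).measure_preimage
      (meas_s (m+1) N lam').nullMeasurableSet
  have hvol2 : volume s = ((volume : Measure ℝ).prod (Measure.pi fun _ : Fin m => volume)) u := by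
    rw [hspre]
    have := MeasureTheory.measurePreserving_piFinSuccAbove
      (fun _ : Fin (m+1) => (volume : Measure ℝ)) 0
    rw [volume_pi]
    exact this.measure_preimage hu.nullMeasurableSet
  rw [hvol1, hvol2, Measure.prod_apply_symm hu]
  -- lower bound the inner integral
  set cube' : Set (Fin m → ℝ) := {y | ∀ j, y j ∈ Set.Icc (0:ℝ) 1} with hcdef
  have hcube'meas : MeasurableSet cube' := by
    have : cube' = Set.pi Set.univ (fun _ => Set.Icc (0:ℝ) 1) := by
      ext z
      simp only [hcdef, Set.mem_setOf_eq, Set.mem_pi, Set.mem_univ, forall_true_left,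
        true_implies]
    rw [this]
    exact MeasurableSet.univ_pi fun _ => measurableSet_Icc
  have hcube'vol : (Measure.pi fun _ : Fin m => (volume : Measure ℝ)) cube' = 1 := by
    have : cube' = Set.pi Set.univ (fun _ : Fin m => Set.Icc (0:ℝ) 1) := by
      ext z
      simp only [hcdef, Set.mem_setOf_eq, Set.mem_pi, Set.mem_univ, forall_true_left,
        true_implies]
    rw [this, Measure.pi_pi]
    simp [Real.volume_Icc]
  have hind : ∀ y : Fin m → ℝ,
      Set.indicator cube' (fun _ => ENNReal.ofReal (lam' - 2 / Real.sqrt N)) y ≤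
        (volume : Measure ℝ) ((fun a => (a, y)) ⁻¹' u) := by
    intro y
    by_cases hy : y ∈ cube'
    · rw [Set.indicator_of_mem hy]
      have hsec : ((fun a => (a, y)) ⁻¹' u) =
          {t : ℝ | t ∈ Set.Icc (0:ℝ) 1 ∧
            Int.fract (N * t ^ 2 + N * ∑ j, (y j) ^ 2) < lam'} := by
        ext a
        simp only [Set.mem_preimage, hudef, Set.mem_setOf_eq]
        rw [show N * (a ^ 2 + ∑ j, (y j) ^ 2) = N * a ^ 2 + N * ∑ j, (y j) ^ 2 by ring]
        constructor
        · rintro ⟨⟨h1', -⟩, h2'⟩; exact ⟨h1', h2'⟩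
        · rintro ⟨h1', h2'⟩; exact ⟨⟨h1', hy⟩, h2'⟩
      rw [hsec]
      exact quad_lower N lam' (N * ∑ j, (y j) ^ 2) hN h0 h1
    · rw [Set.indicator_of_notMem hy]
      exact zero_le
  calc ENNReal.ofReal (lam' - 2 / Real.sqrt N)
      = ENNReal.ofReal (lam' - 2 / Real.sqrt N) *
          (Measure.pi fun _ : Fin m => (volume : Measure ℝ)) cube' := by
        rw [hcube'vol, mul_one]
    _ = ∫⁻ y, Set.indicator cube' (fun _ => ENNReal.ofReal (lam' - 2 / Real.sqrt N)) y
          ∂(Measure.pi fun _ : Fin m => volume) := by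
        rw [lintegral_indicator_const hcube'meas]
    _ ≤ ∫⁻ y, (volume : Measure ℝ) ((fun a => (a, y)) ⁻¹' u)
          ∂(Measure.pi fun _ : Fin m => volume) := lintegral_mono hind
end S14

set_option maxHeartbeats 2000000
open S14

/-- For every `n ≥ 1`, `0 < λ < 1` and `ε > 0`, there is a Borel set `B ⊆ [0,1]ⁿ` with
`Vol(B) ≥ λ` such that every line `ℓ` satisfies `|ℓ ∩ B| ≤ λ·|ℓ ∩ [0,1]ⁿ| + ε`. -/
theorem statement14 (n : ℕ) (hn : 1 ≤ n) (lam ε : ℝ) (hl0 : 0 < lam) (hl1 : lam < 1)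
    (hε : 0 < ε) :
    ∃ B : Set (EucSp n), MeasurableSet B ∧ B ⊆ UnitCube n ∧
      ENNReal.ofReal lam ≤ volume B ∧
      ∀ x y : EucSp n, ‖y‖ = 1 →
        lineMeas B x y ≤
          ENNReal.ofReal lam * lineMeas (UnitCube n) x y + ENNReal.ofReal ε := by
  obtain ⟨m, rfl⟩ : ∃ m, n = m + 1 := ⟨n - 1, by omega⟩
  set sq : ℝ := Real.sqrt ((m : ℝ) + 1) with hsqdef
  have hsq0 : 0 < sq := Real.sqrt_pos.2 (by positivity)
  set δ : ℝ := min (ε / (4 * sq)) ((1 - lam) / 2) with hδdef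
  have hδ0 : 0 < δ := lt_min (by positivity) (by linarith)
  have hδ1 : δ ≤ ε / (4 * sq) := min_le_left _ _
  have hδ2 : δ ≤ (1 - lam) / 2 := min_le_right _ _
  set lam' : ℝ := lam + δ with hlam'def
  have hlam'0 : 0 ≤ lam' := by positivity
  have hlam'1 : lam' ≤ 1 := by simp only [hlam'def]; linarith
  set N : ℝ := max 3 (max ((2 / δ) ^ 2) ((24 / ε) ^ 2)) with hNdef
  have hN1 : (1 : ℝ) ≤ N := le_trans (by norm_num) (le_max_left _ _)
  have hsN : 0 < Real.sqrt N := Real.sqrt_pos.2 (by linarith)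
  have h2N : 2 / Real.sqrt N ≤ δ := by
    have h' : (2 / δ) ^ 2 ≤ N := le_trans (le_max_left _ _) (le_max_right _ _)
    have h'' : 2 / δ ≤ Real.sqrt N := by
      rw [← Real.sqrt_sq (by positivity : (0:ℝ) ≤ 2 / δ)]
      exact Real.sqrt_le_sqrt h'
    rw [div_le_iff₀ hsN]
    rw [div_le_iff₀ hδ0] at h''
    linarith [h'']
  have h12N : 12 / Real.sqrt N ≤ ε / 2 := by
    have h' : (24 / ε) ^ 2 ≤ N := le_trans (le_max_right _ _) (le_max_right _ _)
    have h'' : 24 / ε ≤ Real.sqrt N := by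
      rw [← Real.sqrt_sq (by positivity : (0:ℝ) ≤ 24 / ε)]
      exact Real.sqrt_le_sqrt h'
    rw [div_le_div_iff₀ hsN (by norm_num : (0:ℝ) < 2)]
    rw [div_le_iff₀ hε] at h''
    nlinarith [h'']
  refine ⟨{x : EucSp (m+1) | (∀ i, x i ∈ Set.Icc (0:ℝ) 1) ∧
      Int.fract (N * ∑ i, (x i) ^ 2) < lam'}, meas_B (m+1) N lam', fun x hx => hx.1, ?_, ?_⟩
  · -- volume lower bound
    refine le_trans ?_ (vol_lower m N lam' hN1 hlam'0 hlam'1)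
    apply ENNReal.ofReal_le_ofReal
    simp only [hlam'def]
    linarith
  · -- line bound
    intro x y hy
    have hsy : ∑ i, (y i) ^ 2 = 1 := by
      have h1 := EuclideanSpace.norm_eq y
      rw [hy] at h1
      have h2 : ∑ i, ‖y i‖ ^ 2 = 1 := by
        have h3 : Real.sqrt (∑ i, ‖y i‖ ^ 2) = 1 := h1.symm
        have h4 : (0:ℝ) ≤ ∑ i, ‖y i‖ ^ 2 := by positivity
        nlinarith [Real.sq_sqrt h4, h3]
      rw [← h2]
      exact Finset.sum_congr rfl fun i _ => by rw [Real.norm_eq_abs, sq_abs]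
    have happ : ∀ (t : ℝ) (i : Fin (m+1)), (x + t • y) i = x i + t * y i := fun t i => rfl
    set T : Set ℝ := {t : ℝ | x + t • y ∈ UnitCube (m+1)} with hTdef
    have hmemT : ∀ t : ℝ, t ∈ T ↔ ∀ i, x i + t * y i ∈ Set.Icc (0:ℝ) 1 := by
      intro t
      constructor
      · intro ht i; have := ht i; rwa [happ] at this
      · intro h i; rw [happ]; exact h i
    have hBsubT : {t : ℝ | x + t • y ∈ {x : EucSp (m+1) | (∀ i, x i ∈ Set.Icc (0:ℝ) 1) ∧
        Int.fract (N * ∑ i, (x i) ^ 2) < lam'}} ⊆ T := fun t ht => ht.1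
    rcases Set.eq_empty_or_nonempty T with hTe | ⟨t₁, ht₁⟩
    · have : lineMeas {x : EucSp (m+1) | (∀ i, x i ∈ Set.Icc (0:ℝ) 1) ∧
          Int.fract (N * ∑ i, (x i) ^ 2) < lam'} x y = 0 := by
        apply measure_mono_null hBsubT
        rw [hTe]
        exact measure_empty
      rw [this]
      exact zero_le
    · -- diameter bound
      have hd : ∀ t ∈ T, |t - t₁| ≤ sq := by
        intro t ht
        have hu : x + t • y ∈ UnitCube (m+1) := ht
        have hv : x + t₁ • y ∈ UnitCube (m+1) := ht₁
        have he : (x + t • y) - (x + t₁ • y) = (t - t₁) • y := by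
          rw [sub_smul]; abel
        have hn1 : ‖(x + t • y) - (x + t₁ • y)‖ = |t - t₁| := by
          rw [he, norm_smul, hy, Real.norm_eq_abs, mul_one]
        have hn2 : ‖(x + t • y) - (x + t₁ • y)‖ ≤ sq := by
          rw [EuclideanSpace.norm_eq]
          rw [hsqdef]
          apply Real.sqrt_le_sqrt
          have hbd : ∀ i : Fin (m+1), ‖((x + t • y) - (x + t₁ • y)) i‖ ^ 2 ≤ 1 := by
            intro i
            have hsub : ((x + t • y) - (x + t₁ • y)) i = (x i + t * y i) - (x i + t₁ * y i) :=
              rfl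
            have h1 := (hmemT t).mp hu i
            have h2 := (hmemT t₁).mp hv i
            rw [hsub, Real.norm_eq_abs, sq_abs]
            simp only [Set.mem_Icc] at h1 h2
            nlinarith [h1.1, h1.2, h2.1, h2.2]
          calc ∑ i, ‖((x + t • y) - (x + t₁ • y)) i‖ ^ 2 ≤ ∑ _i : Fin (m+1), (1:ℝ) :=
                Finset.sum_le_sum fun i _ => hbd i
            _ = (m : ℝ) + 1 := by simp
        linarith [hn1 ▸ hn2]
      have hbddB : BddBelow T := ⟨t₁ - sq, fun t ht => by
        have := abs_le.mp (hd t ht); linarith [this.1]⟩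
      have hbddA : BddAbove T := ⟨t₁ + sq, fun t ht => by
        have := abs_le.mp (hd t ht); linarith [(abs_le.mp (hd t ht)).2]⟩
      set α : ℝ := sInf T with hαdef
      set β : ℝ := sSup T with hβdef
      have hne : T.Nonempty := ⟨t₁, ht₁⟩
      have hαβ : α ≤ β := csInf_le_csSup hne hbddB hbddA
      have hTsub : T ⊆ Set.Icc α β := fun t ht => ⟨csInf_le hbddB ht, le_csSup hbddA ht⟩
      have hlen : β - α ≤ 2 * sq := by
        have h1 : β ≤ t₁ + sq := csSup_le hne fun t ht => by
          linarith [(abs_le.mp (hd t ht)).2]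
        have h2 : t₁ - sq ≤ α := le_csInf hne fun t ht => by
          linarith [(abs_le.mp (hd t ht)).1]
        linarith
      have hconv : ∀ a ∈ T, ∀ b ∈ T, ∀ t, a ≤ t → t ≤ b → t ∈ T := by
        intro a ha b hb t hat htb
        rw [hmemT] at ha hb ⊢
        intro i
        have h1 := ha i
        have h2 := hb i
        simp only [Set.mem_Icc] at h1 h2 ⊢
        rcases le_total (y i) 0 with hyi | hyi
        · have e1 := mul_le_mul_of_nonpos_right htb hyi
          have e2 := mul_le_mul_of_nonpos_right hat hyi
          constructor <;> linarith
        · have e1 := mul_le_mul_of_nonneg_right hat hyi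
          have e2 := mul_le_mul_of_nonneg_right htb hyi
          constructor <;> linarith
      have hIoo : Set.Ioo α β ⊆ T := by
        rintro t ⟨h1, h2⟩
        obtain ⟨a, ha, hat⟩ := (csInf_lt_iff hbddB hne).mp h1
        obtain ⟨b, hb, htb⟩ := (lt_csSup_iff hbddA hne).mp h2
        exact hconv a ha b hb t hat.le htb.le
      have hQ : ENNReal.ofReal (β - α) ≤ lineMeas (UnitCube (m+1)) x y := by
        have : lineMeas (UnitCube (m+1)) x y = volume T := rfl
        rw [this, ← Real.volume_Ioo]
        exact measure_mono hIoo
      -- the quadratic parameters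
      set b₀ : ℝ := ∑ i, x i * y i with hb₀def
      set t₀ : ℝ := -b₀ with ht₀def
      set c₀ : ℝ := N * ((∑ i, (x i) ^ 2) - b₀ ^ 2) with hc₀def
      have hexp : ∀ t : ℝ, N * ∑ i, (x i + t * y i) ^ 2 = N * (t - t₀) ^ 2 + c₀ := by
        intro t
        have h1 : ∑ i, (x i + t * y i) ^ 2
            = (∑ i, (x i) ^ 2) + ((2 * t) * ∑ i, (x i * y i) + t ^ 2 * ∑ i, (y i) ^ 2) := by
          rw [Finset.mul_sum, Finset.mul_sum, ← Finset.sum_add_distrib,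
            ← Finset.sum_add_distrib]
          exact Finset.sum_congr rfl fun i _ => by ring
        rw [h1, hsy, ht₀def, hc₀def, hb₀def]
        ring
      have hsubB : {t : ℝ | x + t • y ∈ {x : EucSp (m+1) | (∀ i, x i ∈ Set.Icc (0:ℝ) 1) ∧
          Int.fract (N * ∑ i, (x i) ^ 2) < lam'}}
          ⊆ {t : ℝ | t ∈ Set.Icc α β ∧ Int.fract (N * (t - t₀) ^ 2 + c₀) < lam'} := by
        intro t ht
        have ht1 : t ∈ T := hBsubT ht
        have ht2 : Int.fract (N * ∑ i, ((x + t • y) i) ^ 2) < lam' := ht.2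
        have harg : N * ∑ i, ((x + t • y) i) ^ 2 = N * (t - t₀) ^ 2 + c₀ := by
          rw [show ∑ i, ((x + t • y) i) ^ 2 = ∑ i, (x i + t * y i) ^ 2 from
            Finset.sum_congr rfl fun i _ => by rw [happ], hexp t]
        rw [harg] at ht2
        exact ⟨hTsub ht1, ht2⟩
      calc lineMeas {x : EucSp (m+1) | (∀ i, x i ∈ Set.Icc (0:ℝ) 1) ∧
            Int.fract (N * ∑ i, (x i) ^ 2) < lam'} x y
          ≤ volume {t : ℝ | t ∈ Set.Icc α β ∧ Int.fract (N * (t - t₀) ^ 2 + c₀) < lam'} :=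
            measure_mono hsubB
        _ ≤ ENNReal.ofReal (lam' * (β - α) + 12 / Real.sqrt N) :=
            quad_upper N lam' c₀ t₀ α β hN1 hlam'0 hlam'1
        _ = ENNReal.ofReal (lam * (β - α) + (δ * (β - α) + 12 / Real.sqrt N)) := by
            rw [hlam'def]; ring_nf
        _ ≤ ENNReal.ofReal (lam * (β - α)) +
              ENNReal.ofReal (δ * (β - α) + 12 / Real.sqrt N) := ENNReal.ofReal_add_le
        _ ≤ ENNReal.ofReal lam * lineMeas (UnitCube (m+1)) x y + ENNReal.ofReal ε := by
            apply add_le_add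
            · rw [ENNReal.ofReal_mul hl0.le]
              exact mul_le_mul_right hQ _
            · apply ENNReal.ofReal_le_ofReal
              have e1 : δ * (β - α) ≤ δ * (2 * sq) :=
                mul_le_mul_of_nonneg_left hlen hδ0.le
              have e2 : δ * (2 * sq) ≤ ε / 2 := by
                have := mul_le_mul_of_nonneg_right hδ1 (by positivity : (0:ℝ) ≤ 2 * sq)
                have e3 : ε / (4 * sq) * (2 * sq) = ε / 2 := by
                  field_simp
                  ring
                linarith [this, e3.le, e3.ge]
              linarith

end
end
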